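/- arXiv:2507.20062 — 3 statements merged into one kernel-verified Lean document; each statement's English description precedes it below -/
import Mathlib

section
/- Let S = ∑_{n=0}^∞ a_n be a conditionally divergent series of real numbers with a_0 ≤ 0, such that a_n > 0 for infinitely many n and a_n ≤ 0 for infinitely many n. Suppose the set Z_R = { r ∈ ℝ : ∑_{n=0}^∞ a_{σ(n)} = r for some type R λ-permutation σ of S } is nonempty, and suppose S satisfies both ST_P and ST_N. Then Z_R = ℝ, i.e., for every r ∈ ℝ there exists a type R λ-permutation σ with ∑_{n=0}^∞ a_{σ(n)} = r. -/
open Filter Finset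

noncomputable section
open scoped Classical

/-- Partial sum of the series `∑ a n`: sum of the first `n` terms. -/
def partialSum (a : ℕ → ℝ) (n : ℕ) : ℝ := ∑ i ∈ Finset.range n, a i

/-- The series `∑ a n` converges to `L`. -/
def ConvergesTo (a : ℕ → ℝ) (L : ℝ) : Prop :=
  Filter.Tendsto (partialSum a) Filter.atTop (nhds L)

/-- The series `∑ a n` converges. -/
def Converges (a : ℕ → ℝ) : Prop := ∃ L : ℝ, ConvergesTo a L

/-- The series `∑ a n` is conditionally divergent: it diverges, but some
rearrangement of it converges. -/
def CondDivergent (a : ℕ → ℝ) : Prop :=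
  ¬ Converges a ∧ ∃ σ : Equiv.Perm ℕ, Converges (fun n => a (σ n))

/-- `σ` is a type R permutation of the series `∑ a n`: it preserves the relative
order of terms of the same sign. -/
def IsTypeR (a : ℕ → ℝ) (σ : Equiv.Perm ℕ) : Prop :=
  ∀ i j : ℕ, σ i < σ j →
    ((0 < a (σ i) ∧ 0 < a (σ j)) ∨ (a (σ i) ≤ 0 ∧ a (σ j) ≤ 0)) → i < j

/-- The number of maximal integer intervals whose union is the finite set `s`
(= the number of `x ∈ s` with `x + 1 ∉ s`). -/
def blockCount (s : Finset ℕ) : ℕ := (s.filter (fun x => x + 1 ∉ s)).card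

/-- `σ` has bounded block number `C`: at every stage `n`, the set
`σ '' {0, 1, …, n}` is a union of at most `C` maximal integer intervals. -/
def HasBBN (σ : Equiv.Perm ℕ) (C : ℕ) : Prop :=
  ∀ n : ℕ, blockCount ((Finset.range (n + 1)).image σ) ≤ C

/-- `σ` is a type R λ-permutation of the series `∑ a n`: a type R permutation
with bounded block number whose rearranged series converges. -/
def IsTypeRLambda (a : ℕ → ℝ) (σ : Equiv.Perm ℕ) : Prop :=
  IsTypeR a σ ∧ (∃ C : ℕ, HasBBN σ C) ∧ Converges (fun n => a (σ n))

/-- The set of sums attainable by type R λ-permutations of `∑ a n`. -/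
def ZR (a : ℕ → ℝ) : Set ℝ :=
  {r : ℝ | ∃ σ : Equiv.Perm ℕ, IsTypeRLambda a σ ∧ ConvergesTo (fun n => a (σ n)) r}

/-- The first element `p_i` of the `i`-th positive block `P_i` (blocks 1-indexed):
the `i`-th index `n` with `a n > 0` which starts a maximal interval of positive terms. -/
def posStartIdx (a : ℕ → ℝ) (i : ℕ) : ℕ :=
  Nat.nth (fun n => 0 < a n ∧ (n = 0 ∨ a (n - 1) ≤ 0)) (i - 1)

/-- The last element `q_i` of the `i`-th positive block `P_i` (blocks 1-indexed). -/
def posEndIdx (a : ℕ → ℝ) (i : ℕ) : ℕ :=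
  Nat.nth (fun n => 0 < a n ∧ a (n + 1) ≤ 0) (i - 1)

/-- The first element `n_i` of the `i`-th negative block `N_i` (blocks 1-indexed). -/
def negStartIdx (a : ℕ → ℝ) (i : ℕ) : ℕ :=
  Nat.nth (fun n => a n ≤ 0 ∧ (n = 0 ∨ 0 < a (n - 1))) (i - 1)

/-- The last element `m_i` of the `i`-th negative block `N_i` (blocks 1-indexed). -/
def negEndIdx (a : ℕ → ℝ) (i : ℕ) : ℕ :=
  Nat.nth (fun n => a n ≤ 0 ∧ 0 < a (n + 1)) (i - 1)

/-- `S_{[P_i, P_j]}`: the sum of the terms of `∑ a n` lying in the positive blocks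
`P_i ∪ ⋯ ∪ P_j` (interpreted as `0` when `j < i`). -/
def SP (a : ℕ → ℝ) (i j : ℕ) : ℝ :=
  if j < i then 0
  else ∑ n ∈ Finset.Icc (posStartIdx a i) (posEndIdx a j), if 0 < a n then a n else 0

/-- `S_{[N_i, N_j]}`: the sum of the terms of `∑ a n` lying in the negative blocks
`N_i ∪ ⋯ ∪ N_j` (interpreted as `0` when `j < i`). -/
def SN (a : ℕ → ℝ) (i j : ℕ) : ℝ :=
  if j < i then 0
  else ∑ n ∈ Finset.Icc (negStartIdx a i) (negEndIdx a j), if a n ≤ 0 then a n else 0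

/-- The substantial property on positive blocks. -/
def STP (a : ℕ → ℝ) : Prop :=
  ∃ k : ℕ, ∃ ε : ℝ, 0 < ε ∧ ∃ i0 : ℕ, ∀ i > i0, SP a i (i + k) ≥ ε

/-- The substantial property on negative blocks. -/
def STN (a : ℕ → ℝ) : Prop :=
  ∃ k : ℕ, ∃ ε : ℝ, 0 < ε ∧ ∃ i0 : ℕ, ∀ i > i0, SN a i (i + k) ≤ -ε

namespace CDiv

variable (a : ℕ → ℝ)

/-- end of a positive block -/
def EnPos (n : ℕ) : Prop := 0 < a n ∧ a (n + 1) ≤ 0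
/-- end of a negative block -/
def EnNeg (n : ℕ) : Prop := a n ≤ 0 ∧ 0 < a (n + 1)

def pe : ℕ → ℕ := Nat.nth (EnPos a)
def qe : ℕ → ℕ := Nat.nth (EnNeg a)

variable {a}

lemma cross_up {x y : ℕ} (hx : a x ≤ 0) (hy : 0 < a y) (hxy : x < y) :
    ∃ m, x ≤ m ∧ m < y ∧ EnNeg a m := by
  by_contra h
  push_neg at h
  have key : ∀ d, x + d ≤ y → a (x + d) ≤ 0 := by
    intro d
    induction d with
    | zero => intro _; simpa using hx
    | succ d ih =>
      intro hd
      by_contra hpos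
      push_neg at hpos
      refine (h (x + d) (by omega) (by omega)) ⟨ih (by omega), ?_⟩
      have : x + d + 1 = x + (d + 1) := by omega
      rw [this]; exact hpos
  have h2 := key (y - x) (by omega)
  rw [show x + (y - x) = y by omega] at h2
  exact absurd hy (not_lt.2 h2)

lemma cross_down {x y : ℕ} (hx : 0 < a x) (hy : a y ≤ 0) (hxy : x < y) :
    ∃ m, x ≤ m ∧ m < y ∧ EnPos a m := by
  by_contra h
  push_neg at h
  have key : ∀ d, x + d ≤ y → 0 < a (x + d) := by
    intro d
    induction d with
    | zero => intro _; simpa using hx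
    | succ d ih =>
      intro hd
      by_contra hpos
      push_neg at hpos
      refine (h (x + d) (by omega) (by omega)) ⟨ih (by omega), ?_⟩
      have : x + d + 1 = x + (d + 1) := by omega
      rw [this]; exact hpos
  have h2 := key (y - x) (by omega)
  rw [show x + (y - x) = y by omega] at h2
  exact absurd hy (not_le.2 h2)

variable (hP : {n : ℕ | 0 < a n}.Infinite) (hN : {n : ℕ | a n ≤ 0}.Infinite)

include hP hN in
lemma enPos_infinite : {n | EnPos a n}.Infinite := by
  apply Set.infinite_of_forall_exists_gt
  intro b
  obtain ⟨n1, hn1, hb1⟩ := hP.exists_gt b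
  obtain ⟨n2, hn2, h12⟩ := hN.exists_gt n1
  obtain ⟨m, hm1, hm2, hm3⟩ := cross_down hn1 hn2 h12
  exact ⟨m, hm3, lt_of_lt_of_le hb1 hm1⟩

include hP hN in
lemma enNeg_infinite : {n | EnNeg a n}.Infinite := by
  apply Set.infinite_of_forall_exists_gt
  intro b
  obtain ⟨n1, hn1, hb1⟩ := hN.exists_gt b
  obtain ⟨n2, hn2, h12⟩ := hP.exists_gt n1
  obtain ⟨m, hm1, hm2, hm3⟩ := cross_up hn1 hn2 h12
  exact ⟨m, hm3, lt_of_lt_of_le hb1 hm1⟩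

lemma count_stable (p : ℕ → Prop) [DecidablePred p] :
    ∀ d u, (∀ x, u ≤ x → x < u + d → ¬ p x) → Nat.count p (u + d) = Nat.count p u := by
  intro d
  induction d with
  | zero => intro u _; rfl
  | succ d ih =>
    intro u h
    rw [show u + (d + 1) = (u + d) + 1 by omega, Nat.count_succ,
      if_neg (h _ (by omega) (by omega)), add_zero]
    exact ih u (fun x hx hx' => h x hx (by omega))

variable (h0 : a 0 ≤ 0)

include hP hN h0 in
lemma qe0_sign : ∀ x ≤ qe a 0, a x ≤ 0 := by
  have hEN := enNeg_infinite hP hN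
  intro x hx
  by_contra hpos
  push_neg at hpos
  have hx0 : x ≠ 0 := by rintro rfl; exact absurd hpos (not_lt.2 h0)
  obtain ⟨m, hm1, hm2, hm3⟩ := cross_up h0 hpos (Nat.pos_of_ne_zero hx0)
  have hlt : m < qe a 0 := lt_of_lt_of_le hm2 hx
  have hc : Nat.count (EnNeg a) m < Nat.count (EnNeg a) (qe a 0) := Nat.count_strict_mono hm3 hlt
  rw [qe, Nat.count_nth_of_infinite hEN] at hc
  omega

include hP hN h0 in
lemma struct_step (t : ℕ) (hD : Nat.count (EnPos a) (qe a t) = t) :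
    qe a t < pe a t ∧ (∀ x, qe a t < x → x ≤ pe a t → 0 < a x) ∧
    pe a t < qe a (t+1) ∧ (∀ x, pe a t < x → x ≤ qe a (t+1) → a x ≤ 0) ∧
    Nat.count (EnPos a) (qe a (t+1)) = t + 1 := by
  have hEP := enPos_infinite hP hN
  have hEN := enNeg_infinite hP hN
  have hqe : EnNeg a (qe a t) := Nat.nth_mem_of_infinite hEN t
  have hpe : EnPos a (pe a t) := Nat.nth_mem_of_infinite hEP t
  have hqe1 : EnNeg a (qe a (t+1)) := Nat.nth_mem_of_infinite hEN (t+1)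
  have cEP_pe : Nat.count (EnPos a) (pe a t) = t := Nat.count_nth_of_infinite hEP t
  have cEN_qe : Nat.count (EnNeg a) (qe a t) = t := Nat.count_nth_of_infinite hEN t
  have hnEPqe : ¬ EnPos a (qe a t) := fun h => absurd h.1 (not_lt.2 hqe.1)
  have hDq : Nat.count (EnPos a) (qe a t + 1) = t := by
    rw [Nat.count_succ, if_neg hnEPqe, add_zero, hD]
  have hB : qe a t < pe a t := by
    rcases lt_trichotomy (pe a t) (qe a t) with h | h | h
    · exfalso
      have h1 : Nat.count (EnPos a) (pe a t + 1) = t + 1 := by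
        rw [Nat.count_succ, if_pos hpe, cEP_pe]
      have h2 : Nat.count (EnPos a) (pe a t + 1) ≤ Nat.count (EnPos a) (qe a t) :=
        Nat.count_monotone _ (by omega)
      omega
    · exact absurd (h ▸ hpe.1) (not_lt.2 hqe.1)
    · exact h
  have hF1 : ∀ x, qe a t < x → x ≤ pe a t → 0 < a x := by
    have key : ∀ d, qe a t + 1 + d ≤ pe a t → 0 < a (qe a t + 1 + d) := by
      intro d
      induction d with
      | zero => intro _; simpa using hqe.2
      | succ d ih =>
        intro hd
        have hprev := ih (by omega)
        by_contra hx
        push_neg at hx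
        have hEn : EnPos a (qe a t + 1 + d) := ⟨hprev, by
          have he : qe a t + 1 + d + 1 = qe a t + 1 + (d+1) := by omega
          rw [he]; exact hx⟩
        have h1 : t ≤ Nat.count (EnPos a) (qe a t + 1 + d) := by
          calc t = Nat.count (EnPos a) (qe a t + 1) := hDq.symm
          _ ≤ _ := Nat.count_monotone _ (by omega)
        have h2 : Nat.count (EnPos a) (qe a t + 1 + d) < Nat.count (EnPos a) (pe a t) :=
          Nat.count_strict_mono hEn (by omega)
        omega
    intro x hx1 hx2
    have hh := key (x - (qe a t + 1)) (by omega)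
    rwa [show qe a t + 1 + (x - (qe a t + 1)) = x by omega] at hh
  have hENpe : Nat.count (EnNeg a) (pe a t + 1) = t + 1 := by
    have h1 : Nat.count (EnNeg a) (qe a t + 1) = t + 1 := by
      rw [Nat.count_succ, if_pos hqe, cEN_qe]
    have h2 : Nat.count (EnNeg a) (qe a t + 1 + (pe a t - qe a t)) = t + 1 := by
      rw [count_stable (EnNeg a) _ _ ?_, h1]
      intro x hx1 hx2 hEn
      exact absurd (hF1 x (by omega) (by omega)) (not_lt.2 hEn.1)
    rwa [show qe a t + 1 + (pe a t - qe a t) = pe a t + 1 by omega] at h2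
  have hE : pe a t < qe a (t+1) := by
    have hmono : qe a t < qe a (t+1) := Nat.nth_strictMono hEN (by omega)
    by_contra hc
    push_neg at hc
    exact absurd (hF1 _ (by omega) hc) (not_lt.2 hqe1.1)
  have hF2 : ∀ x, pe a t < x → x ≤ qe a (t+1) → a x ≤ 0 := by
    have key : ∀ d, pe a t + 1 + d ≤ qe a (t+1) → a (pe a t + 1 + d) ≤ 0 := by
      intro d
      induction d with
      | zero => intro _; simpa using hpe.2
      | succ d ih =>
        intro hd
        have hprev := ih (by omega)
        by_contra hx
        push_neg at hx
        have hEn : EnNeg a (pe a t + 1 + d) := ⟨hprev, by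
          have he : pe a t + 1 + d + 1 = pe a t + 1 + (d+1) := by omega
          rw [he]; exact hx⟩
        have h1 : t + 1 ≤ Nat.count (EnNeg a) (pe a t + 1 + d) := by
          calc t + 1 = Nat.count (EnNeg a) (pe a t + 1) := hENpe.symm
          _ ≤ _ := Nat.count_monotone _ (by omega)
        have h2 : Nat.count (EnNeg a) (pe a t + 1 + d) < Nat.count (EnNeg a) (qe a (t+1)) :=
          Nat.count_strict_mono hEn (by omega)
        have h3 : Nat.count (EnNeg a) (qe a (t+1)) = t + 1 := Nat.count_nth_of_infinite hEN (t+1)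
        omega
    intro x hx1 hx2
    have hh := key (x - (pe a t + 1)) (by omega)
    rwa [show pe a t + 1 + (x - (pe a t + 1)) = x by omega] at hh
  have hG : Nat.count (EnPos a) (qe a (t+1)) = t + 1 := by
    have s2 : Nat.count (EnPos a) (pe a t + 1) = t + 1 := by
      rw [Nat.count_succ, if_pos hpe, cEP_pe]
    have s3 : Nat.count (EnPos a) (pe a t + 1 + (qe a (t+1) - (pe a t + 1))) = t + 1 := by
      rw [count_stable (EnPos a) _ _ ?_, s2]
      intro x hx1 hx2 hEn
      exact absurd hEn.1 (not_lt.2 (hF2 x (by omega) (by omega)))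
    rwa [show pe a t + 1 + (qe a (t+1) - (pe a t + 1)) = qe a (t+1) by omega] at s3
  exact ⟨hB, hF1, hE, hF2, hG⟩

include hP hN h0 in
lemma struct_D : ∀ t, Nat.count (EnPos a) (qe a t) = t := by
  intro t
  induction t with
  | zero =>
    rw [Nat.count_iff_forall_not]
    intro m hm hEn
    exact absurd hEn.1 (not_lt.2 (qe0_sign hP hN h0 m (le_of_lt hm)))
  | succ t ih => exact (struct_step hP hN h0 t ih).2.2.2.2

include hP hN h0 in
lemma struct (t : ℕ) :
    qe a t < pe a t ∧ (∀ x, qe a t < x → x ≤ pe a t → 0 < a x) ∧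
    pe a t < qe a (t+1) ∧ (∀ x, pe a t < x → x ≤ qe a (t+1) → a x ≤ 0) ∧
    Nat.count (EnPos a) (qe a t) = t := by
  have h := struct_step hP hN h0 t (struct_D hP hN h0 t)
  exact ⟨h.1, h.2.1, h.2.2.1, h.2.2.2.1, struct_D hP hN h0 t⟩


/-! ### Start-index identification -/

include hP hN h0 in
lemma nth_stPos (t : ℕ) :
    Nat.nth (fun n => 0 < a n ∧ (n = 0 ∨ a (n - 1) ≤ 0)) t = qe a t + 1 := by
  have hEN := enNeg_infinite hP hN
  set p : ℕ → Prop := fun n => 0 < a n ∧ (n = 0 ∨ a (n - 1) ≤ 0) with hp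
  have hiff : ∀ m, p (m + 1) ↔ EnNeg a m := by
    intro m
    constructor
    · rintro ⟨h1, h2 | h2⟩
      · omega
      · exact ⟨by simpa using h2, h1⟩
    · rintro ⟨h1, h2⟩
      exact ⟨h2, Or.inr (by simpa using h1)⟩
  have hcnt : ∀ m, Nat.count p (m + 1) = Nat.count (EnNeg a) m := by
    intro m
    induction m with
    | zero =>
      rw [Nat.count_one, if_neg (fun hh => absurd hh.1 (not_lt.2 h0)), Nat.count_zero]
    | succ m ih =>
      rw [Nat.count_succ, ih]
      by_cases hEn : EnNeg a m
      · rw [if_pos ((hiff m).2 hEn), Nat.count_succ, if_pos hEn]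
      · rw [if_neg (fun hh => hEn ((hiff m).1 hh)), Nat.count_succ, if_neg hEn]
  have hqe : EnNeg a (qe a t) := Nat.nth_mem_of_infinite hEN t
  have hmem : p (qe a t + 1) := ⟨hqe.2, Or.inr (by simpa using hqe.1)⟩
  have hc : Nat.count p (qe a t + 1) = t := by
    rw [hcnt]; exact Nat.count_nth_of_infinite hEN t
  have := Nat.nth_count hmem
  rwa [hc] at this

include h0 in
lemma nth_stNeg_zero :
    Nat.nth (fun n => a n ≤ 0 ∧ (n = 0 ∨ 0 < a (n - 1))) 0 = 0 := by
  have hmem : (fun n => a n ≤ 0 ∧ (n = 0 ∨ 0 < a (n - 1))) 0 := ⟨h0, Or.inl rfl⟩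
  exact Nat.nth_count (p := fun n => a n ≤ 0 ∧ (n = 0 ∨ 0 < a (n - 1))) hmem

include hP hN h0 in
lemma nth_stNeg_succ (t : ℕ) :
    Nat.nth (fun n => a n ≤ 0 ∧ (n = 0 ∨ 0 < a (n - 1))) (t + 1) = pe a t + 1 := by
  have hEP := enPos_infinite hP hN
  set p : ℕ → Prop := fun n => a n ≤ 0 ∧ (n = 0 ∨ 0 < a (n - 1)) with hp
  have hiff : ∀ m, p (m + 1) ↔ EnPos a m := by
    intro m
    constructor
    · rintro ⟨h1, h2 | h2⟩
      · omega
      · exact ⟨by simpa using h2, h1⟩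
    · rintro ⟨h1, h2⟩
      exact ⟨h2, Or.inr (by simpa using h1)⟩
  have hcnt : ∀ m, Nat.count p (m + 1) = 1 + Nat.count (EnPos a) m := by
    intro m
    induction m with
    | zero =>
      rw [Nat.count_one, if_pos ⟨h0, Or.inl rfl⟩, Nat.count_zero]
    | succ m ih =>
      rw [Nat.count_succ, ih]
      by_cases hEn : EnPos a m
      · rw [if_pos ((hiff m).2 hEn), Nat.count_succ, if_pos hEn, add_assoc]
      · rw [if_neg (fun hh => hEn ((hiff m).1 hh)), Nat.count_succ, if_neg hEn, add_zero, add_zero]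
  have hpe : EnPos a (pe a t) := Nat.nth_mem_of_infinite hEP t
  have hmem : p (pe a t + 1) := ⟨hpe.2, Or.inr (by simpa using hpe.1)⟩
  have hc : Nat.count p (pe a t + 1) = t + 1 := by
    rw [hcnt, add_comm]
    congr 1
    exact Nat.count_nth_of_infinite hEP t
  have := Nat.nth_count hmem
  rwa [hc] at this

/-! ### Block sums -/

variable (a)

def ppart (n : ℕ) : ℝ := if 0 < a n then a n else 0
def npart (n : ℕ) : ℝ := if a n ≤ 0 then a n else 0

def BP (t : ℕ) : ℝ := ∑ x ∈ Ioc (qe a t) (pe a t), a x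

def BN : ℕ → ℝ
  | 0 => ∑ x ∈ range (qe a 0 + 1), a x
  | (t + 1) => ∑ x ∈ Ioc (pe a t) (qe a (t + 1)), a x

def CP (j : ℕ) : ℝ := ∑ t ∈ range j, BP a t
def CN (j : ℕ) : ℝ := ∑ t ∈ range j, BN a t

variable {a}

lemma ppart_nonneg (n : ℕ) : 0 ≤ ppart a n := by
  by_cases h : 0 < a n
  · simp [ppart, h, le_of_lt h]
  · simp [ppart, h]

lemma npart_nonpos (n : ℕ) : npart a n ≤ 0 := by
  by_cases h : a n ≤ 0
  · simp [npart, h]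
  · simp [npart, h]

lemma sum_range_split (f : ℕ → ℝ) {u v : ℕ} (h : u ≤ v) :
    ∑ x ∈ range (v + 1), f x = (∑ x ∈ range (u + 1), f x) + ∑ x ∈ Ioc u v, f x := by
  have h1 : Ico (u + 1) (v + 1) = Ioc u v := by rw [Finset.Ico_add_one_right_eq_Icc, Finset.Icc_add_one_left_eq_Ioc]
  calc ∑ x ∈ range (v + 1), f x = ∑ x ∈ Ico 0 (v + 1), f x := by rw [range_eq_Ico]
  _ = (∑ x ∈ Ico 0 (u + 1), f x) + ∑ x ∈ Ico (u + 1) (v + 1), f x :=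
    (Finset.sum_Ico_consecutive f (Nat.zero_le _) (by omega)).symm
  _ = _ := by rw [← range_eq_Ico, h1]


lemma CP_succ (j : ℕ) : CP a (j + 1) = CP a j + BP a j := Finset.sum_range_succ _ j
lemma CN_succ (j : ℕ) : CN a (j + 1) = CN a j + BN a j := Finset.sum_range_succ _ j
lemma CP_zero : CP a 0 = 0 := Finset.sum_range_zero _
lemma CN_zero : CN a 0 = 0 := Finset.sum_range_zero _

include hP hN h0 in
lemma pp_np_sums : ∀ j,
    (∑ x ∈ range (qe a j + 1), ppart a x = CP a j) ∧
    (∑ x ∈ range (pe a j + 1), ppart a x = CP a (j + 1)) ∧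
    (∑ x ∈ range (qe a j + 1), npart a x = CN a (j + 1)) ∧
    (∑ x ∈ range (pe a j + 1), npart a x = CN a (j + 1)) := by
  have hsj := struct hP hN h0
  intro j
  induction j with
  | zero =>
    have hq0 := qe0_sign hP hN h0
    have hF1 := (hsj 0).2.1
    have e1 : ∑ x ∈ range (qe a 0 + 1), ppart a x = CP a 0 := by
      rw [CP_zero]
      refine Finset.sum_eq_zero (fun x hx => ?_)
      rw [ppart, if_neg (not_lt.2 (hq0 x (by simpa [Nat.lt_succ_iff] using hx)))]
    have e2 : ∑ x ∈ range (pe a 0 + 1), ppart a x = CP a 1 := by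
      rw [sum_range_split _ (le_of_lt (hsj 0).1), e1, CP_zero, CP_succ, CP_zero, zero_add, zero_add]
      refine Finset.sum_congr rfl (fun x hx => ?_)
      rw [Finset.mem_Ioc] at hx
      rw [ppart, if_pos (hF1 x hx.1 hx.2)]
    have e3 : ∑ x ∈ range (qe a 0 + 1), npart a x = CN a 1 := by
      rw [CN_succ, CN_zero, zero_add]
      show _ = BN a 0
      rw [BN]
      refine Finset.sum_congr rfl (fun x hx => ?_)
      rw [npart, if_pos (hq0 x (by simpa [Nat.lt_succ_iff] using hx))]
    have e4 : ∑ x ∈ range (pe a 0 + 1), npart a x = CN a 1 := by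
      rw [sum_range_split _ (le_of_lt (hsj 0).1), e3, add_eq_left]
      refine Finset.sum_eq_zero (fun x hx => ?_)
      rw [Finset.mem_Ioc] at hx
      rw [npart, if_neg (not_le.2 (hF1 x hx.1 hx.2))]
    exact ⟨e1, e2, e3, e4⟩
  | succ j ih =>
    have hF2 := (hsj j).2.2.2.1
    have hF1 := (hsj (j+1)).2.1
    have hpq : pe a j < qe a (j + 1) := (hsj j).2.2.1
    have hqp : qe a (j + 1) < pe a (j + 1) := (hsj (j+1)).1
    have e1 : ∑ x ∈ range (qe a (j + 1) + 1), ppart a x = CP a (j + 1) := by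
      rw [sum_range_split _ (le_of_lt hpq), ih.2.1, add_eq_left]
      refine Finset.sum_eq_zero (fun x hx => ?_)
      rw [Finset.mem_Ioc] at hx
      rw [ppart, if_neg (not_lt.2 (hF2 x hx.1 hx.2))]
    have e2 : ∑ x ∈ range (pe a (j + 1) + 1), ppart a x = CP a (j + 2) := by
      rw [sum_range_split _ (le_of_lt hqp), e1, CP_succ (j+1)]
      congr 1
      refine Finset.sum_congr rfl (fun x hx => ?_)
      rw [Finset.mem_Ioc] at hx
      rw [ppart, if_pos (hF1 x hx.1 hx.2)]
    have e3 : ∑ x ∈ range (qe a (j + 1) + 1), npart a x = CN a (j + 2) := by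
      rw [sum_range_split _ (le_of_lt hpq), ih.2.2.2, CN_succ (j+1)]
      congr 1
      refine Finset.sum_congr rfl (fun x hx => ?_)
      rw [Finset.mem_Ioc] at hx
      rw [npart, if_pos (hF2 x hx.1 hx.2)]
    have e4 : ∑ x ∈ range (pe a (j + 1) + 1), npart a x = CN a (j + 2) := by
      rw [sum_range_split _ (le_of_lt hqp), e3, add_eq_left]
      refine Finset.sum_eq_zero (fun x hx => ?_)
      rw [Finset.mem_Ioc] at hx
      rw [npart, if_neg (not_le.2 (hF1 x hx.1 hx.2))]
    exact ⟨e1, e2, e3, e4⟩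

include hP hN h0 in
lemma SP_eq {i j : ℕ} (h1 : 1 ≤ i) (hij : i ≤ j) : SP a i j = CP a j - CP a (i - 1) := by
  rw [SP, if_neg (by omega)]
  have hst : posStartIdx a i = qe a (i - 1) + 1 := nth_stPos hP hN h0 (i - 1)
  have hen : posEndIdx a j = pe a (j - 1) := rfl
  rw [hst, hen, Finset.Icc_add_one_left_eq_Ioc]
  have hle : qe a (i - 1) ≤ pe a (j - 1) := by
    have h2 := (struct hP hN h0 (i-1)).1
    have h3 : pe a (i-1) ≤ pe a (j-1) :=
      Nat.nth_monotone (enPos_infinite hP hN) (by omega)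
    omega
  have hsplit := sum_range_split (ppart a) hle
  have hA := (pp_np_sums hP hN h0 (i - 1)).1
  have hB := (pp_np_sums hP hN h0 (j - 1)).2.1
  rw [show j - 1 + 1 = j by omega] at hB
  have : (∑ x ∈ Ioc (qe a (i-1)) (pe a (j-1)), ppart a x) = CP a j - CP a (i - 1) := by
    rw [← hA, ← hB, hsplit]; ring
  rw [← this]
  rfl

include hP hN h0 in
lemma SN_eq {i j : ℕ} (h1 : 1 ≤ i) (hij : i ≤ j) : SN a i j = CN a j - CN a (i - 1) := by
  rw [SN, if_neg (by omega)]
  rcases Nat.eq_or_lt_of_le h1 with h | h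
  · -- i = 1
    have hst : negStartIdx a i = 0 := by
      rw [show i = 1 by omega]
      exact nth_stNeg_zero h0
    have hen : negEndIdx a j = qe a (j - 1) := rfl
    rw [hst, hen]
    have hIcc : Icc 0 (qe a (j-1)) = range (qe a (j-1) + 1) := by
      rw [range_eq_Ico, Finset.Ico_add_one_right_eq_Icc]
    have hA := (pp_np_sums hP hN h0 (j - 1)).2.2.1
    rw [show j - 1 + 1 = j by omega] at hA
    rw [hIcc, show i - 1 = 0 by omega, CN_zero, sub_zero, ← hA]
    rfl
  · -- 2 ≤ i
    have hst : negStartIdx a i = pe a (i - 2) + 1 := by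
      have := nth_stNeg_succ hP hN h0 (i - 2)
      rw [show i - 2 + 1 = i - 1 by omega] at this
      exact this
    have hen : negEndIdx a j = qe a (j - 1) := rfl
    rw [hst, hen, Finset.Icc_add_one_left_eq_Ioc]
    have hle : pe a (i - 2) ≤ qe a (j - 1) := by
      have h2 := (struct hP hN h0 (i-2)).2.2.1
      have h3 : qe a (i-2+1) ≤ qe a (j-1) :=
        Nat.nth_monotone (enNeg_infinite hP hN) (by omega)
      omega
    have hsplit := sum_range_split (npart a) hle
    have hA := (pp_np_sums hP hN h0 (i - 2)).2.2.2
    have hB := (pp_np_sums hP hN h0 (j - 1)).2.2.1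
    rw [show j - 1 + 1 = j by omega] at hB
    rw [show i - 2 + 1 = i - 1 by omega] at hA
    have : (∑ x ∈ Ioc (pe a (i-2)) (qe a (j-1)), npart a x) = CN a j - CN a (i - 1) := by
      rw [← hA, ← hB, hsplit]; ring
    rw [← this]
    rfl


include hP hN h0 in
lemma BP_pos (t : ℕ) : 0 < BP a t := by
  have hs := struct hP hN h0 t
  rw [BP]
  apply Finset.sum_pos
  · intro x hx; rw [Finset.mem_Ioc] at hx; exact hs.2.1 x hx.1 hx.2
  · exact ⟨pe a t, Finset.mem_Ioc.2 ⟨hs.1, le_refl _⟩⟩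

include hP hN h0 in
lemma BN_nonpos (t : ℕ) : BN a t ≤ 0 := by
  cases t with
  | zero =>
    rw [BN]
    exact Finset.sum_nonpos (fun x hx =>
      qe0_sign hP hN h0 x (by simpa [Nat.lt_succ_iff] using Finset.mem_range.1 hx))
  | succ t =>
    rw [BN]
    exact Finset.sum_nonpos (fun x hx =>
      (struct hP hN h0 t).2.2.2.1 x (Finset.mem_Ioc.1 hx).1 (Finset.mem_Ioc.1 hx).2)

include hP hN h0 in
lemma CP_mono : Monotone (CP a) := by
  apply monotone_nat_of_le_succ
  intro j; rw [CP_succ]; linarith [BP_pos hP hN h0 j]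

include hP hN h0 in
lemma CN_anti : Antitone (CN a) := by
  apply antitone_nat_of_succ_le
  intro j; rw [CN_succ]; linarith [BN_nonpos hP hN h0 j]

lemma CP_growth {k i0 : ℕ} {ε : ℝ} (hw : ∀ t, i0 ≤ t → ε ≤ CP a (t + k + 1) - CP a t) :
    ∀ c t, i0 ≤ t → CP a t + c * ε ≤ CP a (t + c * (k + 1)) := by
  intro c
  induction c with
  | zero => intro t _; simp
  | succ c ih =>
    intro t ht
    have h1 := hw t ht
    have h2 := ih (t + k + 1) (by omega)
    have he : t + k + 1 + c * (k + 1) = t + (c + 1) * (k + 1) := by ring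
    rw [he] at h2
    push_cast
    push_cast at h2
    linarith

lemma CN_decay {k i0 : ℕ} {ε : ℝ} (hw : ∀ t, i0 ≤ t → CN a (t + k + 1) - CN a t ≤ -ε) :
    ∀ c t, i0 ≤ t → CN a (t + c * (k + 1)) ≤ CN a t - c * ε := by
  intro c
  induction c with
  | zero => intro t _; simp
  | succ c ih =>
    intro t ht
    have h1 := hw t ht
    have h2 := ih (t + k + 1) (by omega)
    have he : t + k + 1 + c * (k + 1) = t + (c + 1) * (k + 1) := by ring
    rw [he] at h2
    push_cast
    push_cast at h2
    linarith

/-! ### enumerations of positive and nonpositive indices -/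

variable (a)

def pidx : ℕ → ℕ := Nat.nth (fun n => 0 < a n)
def nidx : ℕ → ℕ := Nat.nth (fun n => a n ≤ 0)
def PP (m : ℕ) : ℝ := ∑ t ∈ range m, a (pidx a t)
def NN (m : ℕ) : ℝ := ∑ t ∈ range m, a (nidx a t)

variable {a}

lemma PP_succ (m : ℕ) : PP a (m + 1) = PP a m + a (pidx a m) := Finset.sum_range_succ _ m
lemma NN_succ (m : ℕ) : NN a (m + 1) = NN a m + a (nidx a m) := Finset.sum_range_succ _ m

include hP in
lemma a_pidx_pos (t : ℕ) : 0 < a (pidx a t) := Nat.nth_mem_of_infinite hP t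

include hN in
lemma a_nidx_nonpos (t : ℕ) : a (nidx a t) ≤ 0 := Nat.nth_mem_of_infinite hN t

include hP in
lemma PP_mono : Monotone (PP a) := by
  apply monotone_nat_of_le_succ
  intro m; rw [PP_succ]; linarith [a_pidx_pos hP m]

include hN in
lemma NN_anti : Antitone (NN a) := by
  apply antitone_nat_of_succ_le
  intro m; rw [NN_succ]; linarith [a_nidx_nonpos hN m]

lemma split_pos (n : ℕ) :
    ∑ x ∈ range n, ppart a x = PP a (Nat.count (fun m => 0 < a m) n) := by
  induction n with
  | zero => simp [PP]
  | succ n ih =>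
    rw [Finset.sum_range_succ, ih, Nat.count_succ]
    by_cases h : 0 < a n
    · have hn : pidx a (Nat.count (fun m => 0 < a m) n) = n := Nat.nth_count h
      rw [if_pos h, PP_succ, hn, ppart, if_pos h]
    · rw [if_neg h, add_zero, ppart, if_neg h, add_zero]

lemma split_neg (n : ℕ) :
    ∑ x ∈ range n, npart a x = NN a (Nat.count (fun m => a m ≤ 0) n) := by
  induction n with
  | zero => simp [NN]
  | succ n ih =>
    rw [Finset.sum_range_succ, ih, Nat.count_succ]
    by_cases h : a n ≤ 0
    · have hn : nidx a (Nat.count (fun m => a m ≤ 0) n) = n := Nat.nth_count h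
      rw [if_pos h, NN_succ, hn, npart, if_pos h]
    · rw [if_neg h, add_zero, npart, if_neg h, add_zero]

include hP hN h0 in
lemma PP_count_pe (j : ℕ) :
    PP a (Nat.count (fun m => 0 < a m) (pe a j + 1)) = CP a (j + 1) := by
  rw [← split_pos, (pp_np_sums hP hN h0 j).2.1]

include hP hN h0 in
lemma PP_count_qe (j : ℕ) :
    PP a (Nat.count (fun m => 0 < a m) (qe a j + 1)) = CP a j := by
  rw [← split_pos, (pp_np_sums hP hN h0 j).1]

include hP hN h0 in
lemma NN_count_qe (j : ℕ) :
    NN a (Nat.count (fun m => a m ≤ 0) (qe a j + 1)) = CN a (j + 1) := by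
  rw [← split_neg, (pp_np_sums hP hN h0 j).2.2.1]

include hP hN h0 in
lemma NN_count_pe (j : ℕ) :
    NN a (Nat.count (fun m => a m ≤ 0) (pe a j + 1)) = CN a (j + 1) := by
  rw [← split_neg, (pp_np_sums hP hN h0 j).2.2.2]

include hP hN h0 in
lemma PP_tendsto {k i0 : ℕ} {ε : ℝ} (hε : 0 < ε)
    (hw : ∀ t, i0 ≤ t → ε ≤ CP a (t + k + 1) - CP a t) :
    Tendsto (PP a) atTop atTop := by
  apply tendsto_atTop_atTop_of_monotone (PP_mono hP)
  intro b
  obtain ⟨c, hc⟩ := exists_nat_ge ((b - CP a i0) / ε)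
  have h1 := CP_growth hw c i0 (le_refl _)
  have h2 : b - CP a i0 ≤ c * ε := by
    rw [div_le_iff₀ hε] at hc; linarith
  refine ⟨Nat.count (fun m => 0 < a m) (pe a (i0 + c * (k + 1)) + 1), ?_⟩
  rw [PP_count_pe hP hN h0]
  have h3 : CP a (i0 + c * (k + 1)) ≤ CP a (i0 + c * (k + 1) + 1) := CP_mono hP hN h0 (by omega)
  linarith

include hP hN h0 in
lemma NN_tendsto {k i0 : ℕ} {ε : ℝ} (hε : 0 < ε)
    (hw : ∀ t, i0 ≤ t → CN a (t + k + 1) - CN a t ≤ -ε) :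
    Tendsto (NN a) atTop atBot := by
  rw [tendsto_atTop_atBot]
  intro b
  obtain ⟨c, hc⟩ := exists_nat_ge ((CN a i0 - b) / ε)
  have h1 := CN_decay hw c i0 (le_refl _)
  have h2 : CN a i0 - b ≤ c * ε := by
    rw [div_le_iff₀ hε] at hc; linarith
  refine ⟨Nat.count (fun m => a m ≤ 0) (qe a (i0 + c * (k + 1)) + 1), ?_⟩
  intro m hm
  have h4 := NN_anti hN hm
  have h5 : CN a (i0 + c * (k + 1) + 1) ≤ CN a (i0 + c * (k + 1)) := CN_anti hP hN h0 (by omega)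
  have h6 := NN_count_qe hP hN h0 (i0 + c * (k + 1))
  rw [h6] at h4
  linarith



/-! ### convergent series have terms tending to zero; bounded partial sums -/

lemma exists_bound_of_tendsto {g : ℕ → ℝ} {L : ℝ} (h : Tendsto g atTop (nhds L)) :
    ∃ M : ℝ, ∀ n, |g n| ≤ M := by
  obtain ⟨N, hN⟩ := (Metric.tendsto_atTop.1 h) 1 one_pos
  have hb : ∀ n : ℕ, ∃ B, ∀ m < n, |g m| ≤ B := by
    intro n
    induction n with
    | zero => exact ⟨0, fun m hm => absurd hm (Nat.not_lt_zero m)⟩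
    | succ n ih =>
      obtain ⟨B, hB⟩ := ih
      refine ⟨max B |g n|, fun m hm => ?_⟩
      rcases Nat.lt_succ_iff_lt_or_eq.1 hm with h | h
      · exact le_trans (hB m h) (le_max_left _ _)
      · subst h; exact le_max_right _ _
  obtain ⟨B, hB⟩ := hb N
  refine ⟨max B (|L| + 1), fun n => ?_⟩
  rcases lt_or_ge n N with h | h
  · exact le_trans (hB n h) (le_max_left _ _)
  · have h1 := hN n h
    rw [Real.dist_eq] at h1
    have h2 := abs_sub_abs_le_abs_sub (g n) L
    have h3 : |g n| ≤ |L| + 1 := by linarith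
    exact le_trans h3 (le_max_right _ _)

lemma tendsto_terms_zero {g : ℕ → ℝ} (h : Converges g) : Tendsto g atTop (nhds 0) := by
  obtain ⟨L, hL⟩ := h
  have h1 : Tendsto (fun n => partialSum g (n + 1)) atTop (nhds L) :=
    hL.comp (tendsto_add_atTop_nat 1)
  have h2 : Tendsto (fun n => partialSum g (n + 1) - partialSum g n) atTop (nhds (L - L)) :=
    h1.sub hL
  rw [sub_self] at h2
  refine h2.congr (fun n => ?_)
  rw [partialSum, partialSum, Finset.sum_range_succ]
  ring

lemma tendsto_a_zero (σ1 : Equiv.Perm ℕ) (h : Converges (fun n => a (σ1 n))) :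
    Tendsto a atTop (nhds 0) := by
  have hb := tendsto_terms_zero h
  have hsymm : Tendsto (fun m => (σ1.symm m : ℕ)) atTop atTop := by
    have h2 : Tendsto (fun m => (σ1.symm m : ℕ)) cofinite cofinite :=
      σ1.symm.injective.tendsto_cofinite
    rwa [Nat.cofinite_eq_atTop] at h2
  have h3 := hb.comp hsymm
  refine h3.congr (fun m => ?_)
  simp

/-! ### type R permutations -/

lemma count_pos_add_count_nonpos (g : ℕ → ℝ) (n : ℕ) :
    Nat.count (fun j => 0 < g j) n + Nat.count (fun j => g j ≤ 0) n = n := by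
  induction n with
  | zero => simp
  | succ n ih =>
    rw [Nat.count_succ, Nat.count_succ]
    by_cases h : 0 < g n
    · rw [if_pos h, if_neg (not_le.2 h)]; omega
    · rw [if_neg h, if_pos (not_lt.1 h)]; omega

lemma count_enum (p : ℕ → Prop) [DecidablePred p] :
    ∀ n t, t < Nat.count p n → ∃ i, i < n ∧ p i ∧ Nat.count p i = t := by
  intro n
  induction n with
  | zero => intro t ht; rw [Nat.count_zero] at ht; omega
  | succ n ih =>
    intro t ht
    rw [Nat.count_succ] at ht
    by_cases h : p n
    · rw [if_pos h] at ht
      rcases Nat.lt_succ_iff_lt_or_eq.1 ht with h2 | h2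
      · obtain ⟨i, h3, h4, h5⟩ := ih t h2; exact ⟨i, by omega, h4, h5⟩
      · exact ⟨n, by omega, h, h2.symm⟩
    · rw [if_neg h, add_zero] at ht
      obtain ⟨i, h3, h4, h5⟩ := ih t ht
      exact ⟨i, by omega, h4, h5⟩

section TypeR

variable {σ : Equiv.Perm ℕ} (hR : IsTypeR a σ)

include hR in
lemma typeR_mono_pos {i j : ℕ} (hi : 0 < a (σ i)) (hj : 0 < a (σ j)) (hij : i < j) :
    σ i < σ j := by
  rcases lt_trichotomy (σ i) (σ j) with h | h | h
  · exact h
  · exact absurd (σ.injective h) (by omega)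
  · have := hR j i h (Or.inl ⟨hj, hi⟩); omega

include hR in
lemma typeR_mono_neg {i j : ℕ} (hi : a (σ i) ≤ 0) (hj : a (σ j) ≤ 0) (hij : i < j) :
    σ i < σ j := by
  rcases lt_trichotomy (σ i) (σ j) with h | h | h
  · exact h
  · exact absurd (σ.injective h) (by omega)
  · have := hR j i h (Or.inr ⟨hj, hi⟩); omega

include hR in
lemma count_sigma_pos (i : ℕ) (h : 0 < a (σ i)) :
    σ i = pidx a (Nat.count (fun j => 0 < a (σ j)) i) := by
  have hcnt : Nat.count (fun m => 0 < a m) (σ i) = Nat.count (fun j => 0 < a (σ j)) i := by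
    rw [Nat.count_eq_card_filter_range, Nat.count_eq_card_filter_range]
    apply Finset.card_bij (fun (m : ℕ) _ => (σ.symm m : ℕ))
    · intro m hm
      rw [Finset.mem_filter, Finset.mem_range] at hm
      rw [Finset.mem_filter, Finset.mem_range]
      have he : σ (σ.symm m) = m := σ.apply_symm_apply m
      constructor
      · exact hR (σ.symm m) i (by rw [he]; exact hm.1) (Or.inl ⟨by rw [he]; exact hm.2, h⟩)
      · rw [he]; exact hm.2
    · intro m1 hm1 m2 hm2 he
      exact σ.symm.injective he
    · intro j hj
      rw [Finset.mem_filter, Finset.mem_range] at hj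
      refine ⟨σ j, ?_, by simp⟩
      rw [Finset.mem_filter, Finset.mem_range]
      exact ⟨typeR_mono_pos hR hj.2 h hj.1, hj.2⟩
  rw [← hcnt]
  exact (Nat.nth_count h).symm

include hR in
lemma count_sigma_neg (i : ℕ) (h : a (σ i) ≤ 0) :
    σ i = nidx a (Nat.count (fun j => a (σ j) ≤ 0) i) := by
  have hcnt : Nat.count (fun m => a m ≤ 0) (σ i) = Nat.count (fun j => a (σ j) ≤ 0) i := by
    rw [Nat.count_eq_card_filter_range, Nat.count_eq_card_filter_range]
    apply Finset.card_bij (fun (m : ℕ) _ => (σ.symm m : ℕ))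
    · intro m hm
      rw [Finset.mem_filter, Finset.mem_range] at hm
      rw [Finset.mem_filter, Finset.mem_range]
      have he : σ (σ.symm m) = m := σ.apply_symm_apply m
      constructor
      · exact hR (σ.symm m) i (by rw [he]; exact hm.1) (Or.inr ⟨by rw [he]; exact hm.2, h⟩)
      · rw [he]; exact hm.2
    · intro m1 hm1 m2 hm2 he
      exact σ.symm.injective he
    · intro j hj
      rw [Finset.mem_filter, Finset.mem_range] at hj
      refine ⟨σ j, ?_, by simp⟩
      rw [Finset.mem_filter, Finset.mem_range]
      exact ⟨typeR_mono_neg hR hj.2 h hj.1, hj.2⟩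
  rw [← hcnt]
  exact (Nat.nth_count h).symm

include hR in
lemma typeR_psum (n : ℕ) :
    partialSum (fun i => a (σ i)) n =
      PP a (Nat.count (fun j => 0 < a (σ j)) n) + NN a (Nat.count (fun j => a (σ j) ≤ 0) n) := by
  induction n with
  | zero => simp [partialSum, PP, NN]
  | succ n ih =>
    have hstep : partialSum (fun i => a (σ i)) (n + 1) =
        partialSum (fun i => a (σ i)) n + a (σ n) := Finset.sum_range_succ _ n
    rw [hstep, ih, Nat.count_succ, Nat.count_succ]
    by_cases h : 0 < a (σ n)
    · rw [if_pos h, if_neg (not_le.2 h), add_zero, PP_succ]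
      have he := count_sigma_pos hR n h
      rw [← he]
      ring
    · rw [if_neg h, if_pos (not_lt.1 h), NN_succ]
      have he := count_sigma_neg hR n (not_lt.1 h)
      rw [← he]
      ring

end TypeR


lemma sum_subset_nonpos {f : ℕ → ℝ} {s t : Finset ℕ} (h : s ⊆ t)
    (hf : ∀ i ∈ t, i ∉ s → f i ≤ 0) : ∑ i ∈ t, f i ≤ ∑ i ∈ s, f i := by
  have h2 := Finset.sum_le_sum_of_subset_of_nonneg (f := fun i => -f i) h
    (fun i hi his => neg_nonneg.2 (hf i hi his))
  simp only [Finset.sum_neg_distrib] at h2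
  linarith

/-! ### analysis of the given λ-permutation -/

section Sigma0

variable {σ0 : Equiv.Perm ℕ} {C0 : ℕ} {M0 : ℝ}
variable (hR0 : IsTypeR a σ0) (hBBN : HasBBN σ0 C0)
variable (hM0 : ∀ n, |partialSum (fun i => a (σ0 i)) n| ≤ M0)

include hP hN hR0 hBBN in
lemma gapP_card (n : ℕ) (hp : 1 ≤ Nat.count (fun j => 0 < a (σ0 j)) (n + 1))
    (hq : 1 ≤ Nat.count (fun j => a (σ0 j) ≤ 0) (n + 1)) :
    #((Ioc (nidx a (Nat.count (fun j => a (σ0 j) ≤ 0) (n + 1) - 1))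
        (pidx a (Nat.count (fun j => 0 < a (σ0 j)) (n + 1) - 1))).filter (EnPos a)) ≤ C0 := by
  set p := Nat.count (fun j => 0 < a (σ0 j)) (n + 1) with hpdef
  set q := Nat.count (fun j => a (σ0 j) ≤ 0) (n + 1) with hqdef
  set U := (range (n + 1)).image (σ0 : ℕ → ℕ) with hU
  have hsub : (Ioc (nidx a (q - 1)) (pidx a (p - 1))).filter (EnPos a) ⊆
      U.filter (fun x => x + 1 ∉ U) := by
    intro x hx
    rw [Finset.mem_filter, Finset.mem_Ioc] at hx
    obtain ⟨⟨hx1, hx2⟩, hx3⟩ := hx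
    rw [Finset.mem_filter]
    constructor
    · -- x ∈ U
      have hxpos : 0 < a x := hx3.1
      have hxt : pidx a (Nat.count (fun m => 0 < a m) x) = x := Nat.nth_count hxpos
      have ht : Nat.count (fun m => 0 < a m) x < p := by
        have h1 : Nat.count (fun m => 0 < a m) x ≤
            Nat.count (fun m => 0 < a m) (pidx a (p - 1)) := Nat.count_monotone _ hx2
        have h2 : Nat.count (fun m => 0 < a m) (pidx a (p - 1)) = p - 1 :=
          Nat.count_nth_of_infinite hP (p - 1)
        omega
      obtain ⟨i, hi1, hi2, hi3⟩ := count_enum (fun j => 0 < a (σ0 j)) (n + 1) _ ht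
      have := count_sigma_pos hR0 i hi2
      rw [hi3, hxt] at this
      exact Finset.mem_image.2 ⟨i, Finset.mem_range.2 hi1, this⟩
    · -- x + 1 ∉ U
      intro hmem
      obtain ⟨i, hi1, hi2⟩ := Finset.mem_image.1 hmem
      rw [Finset.mem_range] at hi1
      have hneg : a (σ0 i) ≤ 0 := by rw [hi2]; exact hx3.2
      have he := count_sigma_neg hR0 i hneg
      have hcnt : Nat.count (fun j => a (σ0 j) ≤ 0) i < q :=
        Nat.count_strict_mono hneg hi1
      have : x + 1 ≤ nidx a (q - 1) := by
        rw [hi2] at he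
        rw [he]
        exact Nat.nth_monotone hN (by omega)
      omega
  calc #((Ioc (nidx a (q - 1)) (pidx a (p - 1))).filter (EnPos a))
      ≤ #(U.filter (fun x => x + 1 ∉ U)) := Finset.card_le_card hsub
  _ ≤ C0 := hBBN n

include hP hN hR0 hBBN in
lemma gapN_card (n : ℕ) (hp : 1 ≤ Nat.count (fun j => 0 < a (σ0 j)) (n + 1))
    (hq : 1 ≤ Nat.count (fun j => a (σ0 j) ≤ 0) (n + 1)) :
    #((Ioc (pidx a (Nat.count (fun j => 0 < a (σ0 j)) (n + 1) - 1))
        (nidx a (Nat.count (fun j => a (σ0 j) ≤ 0) (n + 1) - 1))).filter (EnNeg a)) ≤ C0 := by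
  set p := Nat.count (fun j => 0 < a (σ0 j)) (n + 1) with hpdef
  set q := Nat.count (fun j => a (σ0 j) ≤ 0) (n + 1) with hqdef
  set U := (range (n + 1)).image (σ0 : ℕ → ℕ) with hU
  have hsub : (Ioc (pidx a (p - 1)) (nidx a (q - 1))).filter (EnNeg a) ⊆
      U.filter (fun x => x + 1 ∉ U) := by
    intro x hx
    rw [Finset.mem_filter, Finset.mem_Ioc] at hx
    obtain ⟨⟨hx1, hx2⟩, hx3⟩ := hx
    rw [Finset.mem_filter]
    constructor
    · have hxneg : a x ≤ 0 := hx3.1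
      have hxt : nidx a (Nat.count (fun m => a m ≤ 0) x) = x := Nat.nth_count hxneg
      have ht : Nat.count (fun m => a m ≤ 0) x < q := by
        have h1 : Nat.count (fun m => a m ≤ 0) x ≤
            Nat.count (fun m => a m ≤ 0) (nidx a (q - 1)) := Nat.count_monotone _ hx2
        have h2 : Nat.count (fun m => a m ≤ 0) (nidx a (q - 1)) = q - 1 :=
          Nat.count_nth_of_infinite hN (q - 1)
        omega
      obtain ⟨i, hi1, hi2, hi3⟩ := count_enum (fun j => a (σ0 j) ≤ 0) (n + 1) _ ht
      have := count_sigma_neg hR0 i hi2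
      rw [hi3, hxt] at this
      exact Finset.mem_image.2 ⟨i, Finset.mem_range.2 hi1, this⟩
    · intro hmem
      obtain ⟨i, hi1, hi2⟩ := Finset.mem_image.1 hmem
      rw [Finset.mem_range] at hi1
      have hpos : 0 < a (σ0 i) := by rw [hi2]; exact hx3.2
      have he := count_sigma_pos hR0 i hpos
      have hcnt : Nat.count (fun j => 0 < a (σ0 j)) i < p :=
        Nat.count_strict_mono hpos hi1
      have : x + 1 ≤ pidx a (p - 1) := by
        rw [hi2] at he
        rw [he]
        exact Nat.nth_monotone hP (by omega)
      omega
  calc #((Ioc (pidx a (p - 1)) (nidx a (q - 1))).filter (EnNeg a))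
      ≤ #(U.filter (fun x => x + 1 ∉ U)) := Finset.card_le_card hsub
  _ ≤ C0 := hBBN n

include hP hN h0 hR0 hBBN hM0 in
lemma balance_A1 : ∃ J : ℕ, ∀ j, J ≤ j → -M0 ≤ CP a (j + 1) + CN a (j - C0 + 1) := by
  have hEP := enPos_infinite hP hN
  have hEN := enNeg_infinite hP hN
  have hBne : ((range (σ0.symm 0 + 1)).image (σ0 : ℕ → ℕ)).Nonempty :=
    (Finset.nonempty_range_iff.2 (by omega)).image _
  set B0 := ((range (σ0.symm 0 + 1)).image (σ0 : ℕ → ℕ)).max' hBne with hB0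
  refine ⟨B0 + C0 + 1, fun j hj => ?_⟩
  set i := σ0.symm (pe a j) with hidef
  have hσi : σ0 i = pe a j := σ0.apply_symm_apply _
  have hpej : EnPos a (pe a j) := Nat.nth_mem_of_infinite hEP j
  have hpos : 0 < a (σ0 i) := by rw [hσi]; exact hpej.1
  set p := Nat.count (fun l => 0 < a (σ0 l)) (i + 1) with hpdef
  set q := Nat.count (fun l => a (σ0 l) ≤ 0) (i + 1) with hqdef
  have hpi : p = Nat.count (fun l => 0 < a (σ0 l)) i + 1 := by
    rw [hpdef, Nat.count_succ, if_pos hpos]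
  have hFP : pidx a (p - 1) = pe a j := by
    rw [hpi]
    simp only [Nat.add_sub_cancel]
    rw [← count_sigma_pos hR0 i hpos, hσi]
  have hjpej : j ≤ pe a j := (Nat.nth_strictMono hEP).le_apply
  have hs0i : σ0.symm 0 < i := by
    by_contra hc
    push_neg at hc
    have hm : pe a j ∈ (range (σ0.symm 0 + 1)).image (σ0 : ℕ → ℕ) :=
      Finset.mem_image.2 ⟨i, Finset.mem_range.2 (by omega), hσi⟩
    have := Finset.le_max' _ _ hm
    omega
  have hq1 : 1 ≤ q := by
    have h00 : a (σ0 (σ0.symm 0)) ≤ 0 := by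
      rw [σ0.apply_symm_apply]; exact h0
    have h2 : Nat.count (fun l => a (σ0 l) ≤ 0) (σ0.symm 0) < q :=
      Nat.count_strict_mono h00 (by omega)
    omega
  have hgap := gapP_card hP hN hR0 hBBN i (by omega) hq1
  rw [← hpdef, ← hqdef] at hgap
  have hFN : qe a (j - C0) ≤ nidx a (q - 1) := by
    by_contra hc
    push_neg at hc
    have hsub : (Icc (j - C0) j).image (pe a) ⊆
        (Ioc (nidx a (q - 1)) (pidx a (p - 1))).filter (EnPos a) := by
      intro x hx
      obtain ⟨s, hs, rfl⟩ := Finset.mem_image.1 hx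
      rw [Finset.mem_Icc] at hs
      rw [Finset.mem_filter, Finset.mem_Ioc]
      refine ⟨⟨?_, ?_⟩, Nat.nth_mem_of_infinite hEP s⟩
      · have h3 := (struct hP hN h0 s).1
        have h4 : qe a (j - C0) ≤ qe a s := Nat.nth_monotone hEN hs.1
        omega
      · rw [hFP]; exact Nat.nth_monotone hEP hs.2
    have hinj : Function.Injective (pe a) := Nat.nth_injective hEP
    have h1 : #((Icc (j - C0) j).image (pe a)) = C0 + 1 := by
      rw [Finset.card_image_of_injective _ hinj, Nat.card_Icc]
      omega
    have h2 := Finset.card_le_card hsub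
    omega
  have hq_eq : q = Nat.count (fun m => a m ≤ 0) (nidx a (q - 1) + 1) := by
    have hmem : a (nidx a (q - 1)) ≤ 0 := Nat.nth_mem_of_infinite hN (q - 1)
    have h6 : Nat.count (fun m => a m ≤ 0) (nidx a (q - 1)) = q - 1 :=
      Nat.count_nth_of_infinite hN (q - 1)
    rw [Nat.count_succ, if_pos hmem]
    omega
  have hNNq : NN a q ≤ CN a (j - C0 + 1) := by
    have h1 : NN a q = ∑ x ∈ range (nidx a (q - 1) + 1), npart a x := by
      rw [split_neg, ← hq_eq]
    have h2 := (pp_np_sums hP hN h0 (j - C0)).2.2.1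
    rw [h1, ← h2]
    apply sum_subset_nonpos
    · intro x hx
      rw [Finset.mem_range] at hx ⊢
      omega
    · intro x _ _
      exact npart_nonpos x
  have hPPp : PP a p = CP a (j + 1) := by
    have hc : p = Nat.count (fun m => 0 < a m) (pe a j + 1) := by
      rw [Nat.count_succ, if_pos hpej.1]
      have h5 : Nat.count (fun m => 0 < a m) (pe a j) = p - 1 := by
        rw [← hFP]; exact Nat.count_nth_of_infinite hP (p - 1)
      omega
    rw [hc]
    exact PP_count_pe hP hN h0 j
  have hsum := typeR_psum hR0 (i + 1)
  rw [← hpdef, ← hqdef] at hsum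
  have hM := (abs_le.1 (hM0 (i + 1))).1
  rw [hsum] at hM
  rw [hPPp] at hM
  linarith

include hP hN h0 hR0 hBBN hM0 in
lemma balance_A2 : ∃ J : ℕ, ∀ j, J ≤ j → CN a (j + 1) + CP a (j - C0) ≤ M0 := by
  have hEP := enPos_infinite hP hN
  have hEN := enNeg_infinite hP hN
  have hBne : ((range (σ0.symm (pe a 0) + 1)).image (σ0 : ℕ → ℕ)).Nonempty :=
    (Finset.nonempty_range_iff.2 (by omega)).image _
  set B0 := ((range (σ0.symm (pe a 0) + 1)).image (σ0 : ℕ → ℕ)).max' hBne with hB0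
  refine ⟨B0 + C0 + 1, fun j hj => ?_⟩
  set i := σ0.symm (qe a j) with hidef
  have hσi : σ0 i = qe a j := σ0.apply_symm_apply _
  have hqej : EnNeg a (qe a j) := Nat.nth_mem_of_infinite hEN j
  have hneg : a (σ0 i) ≤ 0 := by rw [hσi]; exact hqej.1
  set p := Nat.count (fun l => 0 < a (σ0 l)) (i + 1) with hpdef
  set q := Nat.count (fun l => a (σ0 l) ≤ 0) (i + 1) with hqdef
  have hqi : q = Nat.count (fun l => a (σ0 l) ≤ 0) i + 1 := by
    rw [hqdef, Nat.count_succ, if_pos hneg]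
  have hFN : nidx a (q - 1) = qe a j := by
    rw [hqi]
    simp only [Nat.add_sub_cancel]
    rw [← count_sigma_neg hR0 i hneg, hσi]
  have hjqej : j ≤ qe a j := (Nat.nth_strictMono hEN).le_apply
  have hs0i : σ0.symm (pe a 0) < i := by
    by_contra hc
    push_neg at hc
    have hm : qe a j ∈ (range (σ0.symm (pe a 0) + 1)).image (σ0 : ℕ → ℕ) :=
      Finset.mem_image.2 ⟨i, Finset.mem_range.2 (by omega), hσi⟩
    have := Finset.le_max' _ _ hm
    omega
  have hp1 : 1 ≤ p := by
    have h00 : 0 < a (σ0 (σ0.symm (pe a 0))) := by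
      rw [σ0.apply_symm_apply]
      exact (Nat.nth_mem_of_infinite hEP 0).1
    have h2 : Nat.count (fun l => 0 < a (σ0 l)) (σ0.symm (pe a 0)) < p :=
      Nat.count_strict_mono h00 (by omega)
    omega
  have hgap := gapN_card hP hN hR0 hBBN i hp1 (by omega)
  rw [← hpdef, ← hqdef] at hgap
  have hFP : qe a (j - C0) ≤ pidx a (p - 1) := by
    by_contra hc
    push_neg at hc
    have hsub : (Icc (j - C0) j).image (qe a) ⊆
        (Ioc (pidx a (p - 1)) (nidx a (q - 1))).filter (EnNeg a) := by
      intro x hx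
      obtain ⟨s, hs, rfl⟩ := Finset.mem_image.1 hx
      rw [Finset.mem_Icc] at hs
      rw [Finset.mem_filter, Finset.mem_Ioc]
      refine ⟨⟨?_, ?_⟩, Nat.nth_mem_of_infinite hEN s⟩
      · have h4 : qe a (j - C0) ≤ qe a s := Nat.nth_monotone hEN hs.1
        omega
      · rw [hFN]; exact Nat.nth_monotone hEN hs.2
    have hinj : Function.Injective (qe a) := Nat.nth_injective hEN
    have h1 : #((Icc (j - C0) j).image (qe a)) = C0 + 1 := by
      rw [Finset.card_image_of_injective _ hinj, Nat.card_Icc]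
      omega
    have h2 := Finset.card_le_card hsub
    omega
  have hp_eq : p = Nat.count (fun m => 0 < a m) (pidx a (p - 1) + 1) := by
    have hmem : 0 < a (pidx a (p - 1)) := Nat.nth_mem_of_infinite hP (p - 1)
    have h6 : Nat.count (fun m => 0 < a m) (pidx a (p - 1)) = p - 1 :=
      Nat.count_nth_of_infinite hP (p - 1)
    rw [Nat.count_succ, if_pos hmem]
    omega
  have hPPp : CP a (j - C0) ≤ PP a p := by
    have h1 : PP a p = ∑ x ∈ range (pidx a (p - 1) + 1), ppart a x := by
      rw [split_pos, ← hp_eq]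
    have h2 := (pp_np_sums hP hN h0 (j - C0)).1
    rw [h1, ← h2]
    apply Finset.sum_le_sum_of_subset_of_nonneg
    · intro x hx
      rw [Finset.mem_range] at hx ⊢
      omega
    · intro x _ _
      exact ppart_nonneg x
  have hNNq : NN a q = CN a (j + 1) := by
    have hc : q = Nat.count (fun m => a m ≤ 0) (qe a j + 1) := by
      rw [Nat.count_succ, if_pos hqej.1]
      have h5 : Nat.count (fun m => a m ≤ 0) (qe a j) = q - 1 := by
        rw [← hFN]; exact Nat.count_nth_of_infinite hN (q - 1)
      omega
    rw [hc]
    exact NN_count_qe hP hN h0 j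
  have hsum := typeR_psum hR0 (i + 1)
  rw [← hpdef, ← hqdef] at hsum
  have hM := (abs_le.1 (hM0 (i + 1))).2
  rw [hsum] at hM
  rw [hNNq] at hM
  linarith

end Sigma0


/-! ### the greedy rearrangement -/

section Greedy

variable (a)
variable (r : ℝ)

def gstate : ℕ → ℕ × ℕ
  | 0 => (0, 0)
  | (n + 1) =>
    let pq := gstate n
    if PP a pq.1 + NN a pq.2 ≤ r then (pq.1 + 1, pq.2) else (pq.1, pq.2 + 1)

def gp (n : ℕ) : ℕ := (gstate a r n).1
def gq (n : ℕ) : ℕ := (gstate a r n).2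
def gs (n : ℕ) : ℝ := PP a (gp a r n) + NN a (gq a r n)
def gf (n : ℕ) : ℕ := if gs a r n ≤ r then pidx a (gp a r n) else nidx a (gq a r n)

variable {a r}

lemma gp_zero : gp a r 0 = 0 := rfl
lemma gq_zero : gq a r 0 = 0 := rfl

lemma gstate_succ (n : ℕ) :
    gstate a r (n + 1) = if PP a (gp a r n) + NN a (gq a r n) ≤ r
      then (gp a r n + 1, gq a r n) else (gp a r n, gq a r n + 1) := rfl

lemma gp_succ_pos {n : ℕ} (h : gs a r n ≤ r) : gp a r (n + 1) = gp a r n + 1 := by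
  rw [gp, gstate_succ, if_pos (show PP a (gp a r n) + NN a (gq a r n) ≤ r from h)]

lemma gq_succ_pos {n : ℕ} (h : gs a r n ≤ r) : gq a r (n + 1) = gq a r n := by
  rw [gq, gstate_succ, if_pos (show PP a (gp a r n) + NN a (gq a r n) ≤ r from h)]

lemma gp_succ_neg {n : ℕ} (h : ¬ gs a r n ≤ r) : gp a r (n + 1) = gp a r n := by
  rw [gp, gstate_succ, if_neg (show ¬ PP a (gp a r n) + NN a (gq a r n) ≤ r from h)]

lemma gq_succ_neg {n : ℕ} (h : ¬ gs a r n ≤ r) : gq a r (n + 1) = gq a r n + 1 := by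
  rw [gq, gstate_succ, if_neg (show ¬ PP a (gp a r n) + NN a (gq a r n) ≤ r from h)]

lemma gp_step_le (n : ℕ) : gp a r (n + 1) ≤ gp a r n + 1 := by
  by_cases h : gs a r n ≤ r
  · rw [gp_succ_pos h]
  · rw [gp_succ_neg h]; omega

lemma gq_step_le (n : ℕ) : gq a r (n + 1) ≤ gq a r n + 1 := by
  by_cases h : gs a r n ≤ r
  · rw [gq_succ_pos h]; omega
  · rw [gq_succ_neg h]

lemma gp_mono : Monotone (gp a r) := by
  apply monotone_nat_of_le_succ
  intro n
  by_cases h : gs a r n ≤ r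
  · rw [gp_succ_pos h]; omega
  · rw [gp_succ_neg h]

lemma gq_mono : Monotone (gq a r) := by
  apply monotone_nat_of_le_succ
  intro n
  by_cases h : gs a r n ≤ r
  · rw [gq_succ_pos h]
  · rw [gq_succ_neg h]; omega

lemma gs_succ_pos {n : ℕ} (h : gs a r n ≤ r) :
    gs a r (n + 1) = gs a r n + a (pidx a (gp a r n)) := by
  rw [gs, gp_succ_pos h, gq_succ_pos h, PP_succ, gs]
  ring

lemma gs_succ_neg {n : ℕ} (h : ¬ gs a r n ≤ r) :
    gs a r (n + 1) = gs a r n + a (nidx a (gq a r n)) := by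
  rw [gs, gp_succ_neg h, gq_succ_neg h, NN_succ, gs]
  ring

lemma gsum_eq (n : ℕ) : partialSum (fun i => a (gf a r i)) n = gs a r n := by
  induction n with
  | zero => simp [partialSum, gs, gp_zero, gq_zero, PP, NN]
  | succ n ih =>
    have hstep : partialSum (fun i => a (gf a r i)) (n + 1) =
        partialSum (fun i => a (gf a r i)) n + a (gf a r n) := Finset.sum_range_succ _ n
    rw [hstep, ih]
    by_cases h : gs a r n ≤ r
    · rw [gs_succ_pos h, gf, if_pos h]
    · rw [gs_succ_neg h, gf, if_neg h]

variable (hPPtop : Tendsto (PP a) atTop atTop) (hNNbot : Tendsto (NN a) atTop atBot)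

include hNNbot in
lemma exists_pos_step : ∀ N : ℕ, ∃ n, N ≤ n ∧ gs a r n ≤ r := by
  intro N
  by_contra hc
  push_neg at hc
  have hfreeze : ∀ d, gp a r (N + d) = gp a r N ∧ gq a r (N + d) = gq a r N + d := by
    intro d
    induction d with
    | zero => simp
    | succ d ih =>
      have hgt : ¬ gs a r (N + d) ≤ r := not_le.2 (hc (N + d) (by omega))
      constructor
      · rw [show N + (d + 1) = (N + d) + 1 by omega, gp_succ_neg hgt, ih.1]
      · rw [show N + (d + 1) = (N + d) + 1 by omega, gq_succ_neg hgt, ih.2]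
        omega
  obtain ⟨m0, hm0⟩ := Filter.tendsto_atTop_atBot.1 hNNbot (r - PP a (gp a r N))
  have h1 := hm0 (gq a r N + m0) (by omega)
  have h2 := hfreeze m0
  have h3 : gs a r (N + m0) ≤ r := by
    rw [gs, h2.1, h2.2]
    linarith
  exact absurd h3 (not_le.2 (hc (N + m0) (by omega)))

include hPPtop in
lemma exists_neg_step : ∀ N : ℕ, ∃ n, N ≤ n ∧ ¬ gs a r n ≤ r := by
  intro N
  by_contra hc
  push_neg at hc
  have hfreeze : ∀ d, gp a r (N + d) = gp a r N + d ∧ gq a r (N + d) = gq a r N := by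
    intro d
    induction d with
    | zero => simp
    | succ d ih =>
      have hgt : gs a r (N + d) ≤ r := hc (N + d) (by omega)
      constructor
      · rw [show N + (d + 1) = (N + d) + 1 by omega, gp_succ_pos hgt, ih.1]
        omega
      · rw [show N + (d + 1) = (N + d) + 1 by omega, gq_succ_pos hgt, ih.2]
  obtain ⟨m0, hm0⟩ := Filter.tendsto_atTop_atTop.1 hPPtop (r + 1 - NN a (gq a r N))
  have h1 := hm0 (gp a r N + m0) (by omega)
  have h2 := hfreeze m0
  have h3 : ¬ gs a r (N + m0) ≤ r := by
    rw [gs, h2.1, h2.2]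
    push_neg
    linarith
  exact absurd (hc (N + m0) (by omega)) h3

include hNNbot in
lemma gp_unbounded : ∀ c : ℕ, ∃ n, c ≤ gp a r n := by
  intro c
  induction c with
  | zero => exact ⟨0, by omega⟩
  | succ c ih =>
    obtain ⟨n, hn⟩ := ih
    obtain ⟨n2, hn2, hgs⟩ := exists_pos_step hNNbot n
    refine ⟨n2 + 1, ?_⟩
    have h1 := gp_mono (a := a) (r := r) hn2
    rw [gp_succ_pos hgs]
    omega

include hPPtop in
lemma gq_unbounded : ∀ c : ℕ, ∃ n, c ≤ gq a r n := by
  intro c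
  induction c with
  | zero => exact ⟨0, by omega⟩
  | succ c ih =>
    obtain ⟨n, hn⟩ := ih
    obtain ⟨n2, hn2, hgs⟩ := exists_neg_step hPPtop n
    refine ⟨n2 + 1, ?_⟩
    have h1 := gq_mono (a := a) (r := r) hn2
    rw [gq_succ_neg hgs]
    omega

include hNNbot in
lemma gp_tendsto : Tendsto (gp a r) atTop atTop := by
  apply tendsto_atTop_atTop_of_monotone gp_mono
  intro c
  obtain ⟨n, hn⟩ := gp_unbounded hNNbot c
  exact ⟨n, hn⟩

include hPPtop in
lemma gq_tendsto : Tendsto (gq a r) atTop atTop := by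
  apply tendsto_atTop_atTop_of_monotone gq_mono
  intro c
  obtain ⟨n, hn⟩ := gq_unbounded hPPtop c
  exact ⟨n, hn⟩

include hNNbot in
lemma gp_hits (t : ℕ) : ∃ n, gp a r n = t ∧ gs a r n ≤ r := by
  have hex : ∃ n, t + 1 ≤ gp a r n := gp_unbounded hNNbot (t + 1)
  set n := Nat.find hex with hn
  have hfind : t + 1 ≤ gp a r n := Nat.find_spec hex
  have hn1 : n ≠ 0 := by
    intro hn0
    rw [hn0, gp_zero] at hfind
    omega
  have hprev : ¬ t + 1 ≤ gp a r (n - 1) := Nat.find_min hex (by omega)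
  have hstep := gp_step_le (a := a) (r := r) (n - 1)
  rw [show n - 1 + 1 = n by omega] at hstep
  have hgs : gs a r (n - 1) ≤ r := by
    by_contra hgt
    rw [← show n - 1 + 1 = n by omega, gp_succ_neg hgt] at hfind
    omega
  refine ⟨n - 1, ?_, hgs⟩
  have := gp_succ_pos hgs
  rw [show n - 1 + 1 = n by omega] at this
  omega

include hPPtop in
lemma gq_hits (t : ℕ) : ∃ n, gq a r n = t ∧ ¬ gs a r n ≤ r := by
  have hex : ∃ n, t + 1 ≤ gq a r n := gq_unbounded hPPtop (t + 1)
  set n := Nat.find hex with hn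
  have hfind : t + 1 ≤ gq a r n := Nat.find_spec hex
  have hn1 : n ≠ 0 := by
    intro hn0
    rw [hn0, gq_zero] at hfind
    omega
  have hprev : ¬ t + 1 ≤ gq a r (n - 1) := Nat.find_min hex (by omega)
  have hstep := gq_step_le (a := a) (r := r) (n - 1)
  rw [show n - 1 + 1 = n by omega] at hstep
  have hgs : ¬ gs a r (n - 1) ≤ r := by
    intro hle
    rw [← show n - 1 + 1 = n by omega, gq_succ_pos hle] at hfind
    omega
  refine ⟨n - 1, ?_, hgs⟩
  have := gq_succ_neg hgs
  rw [show n - 1 + 1 = n by omega] at this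
  omega

include hP hN in
lemma gf_injective : Function.Injective (gf a r) := by
  have key : ∀ m n, m < n → gf a r m ≠ gf a r n := by
    intro m n hmn he
    by_cases hm : gs a r m ≤ r <;> by_cases hn : gs a r n ≤ r
    · rw [gf, if_pos hm, gf, if_pos hn] at he
      have h1 : gp a r m = gp a r n := Nat.nth_injective hP he
      have h2 := gp_succ_pos hm
      have h3 : gp a r (m + 1) ≤ gp a r n := gp_mono (by omega)
      omega
    · rw [gf, if_pos hm, gf, if_neg hn] at he
      have h1 : 0 < a (pidx a (gp a r m)) := a_pidx_pos hP _
      rw [he] at h1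
      exact absurd (a_nidx_nonpos hN (gq a r n)) (not_le.2 h1)
    · rw [gf, if_neg hm, gf, if_pos hn] at he
      have h1 : 0 < a (pidx a (gp a r n)) := a_pidx_pos hP _
      rw [← he] at h1
      exact absurd (a_nidx_nonpos hN (gq a r m)) (not_le.2 h1)
    · rw [gf, if_neg hm, gf, if_neg hn] at he
      have h1 : gq a r m = gq a r n := Nat.nth_injective hN he
      have h2 := gq_succ_neg hm
      have h3 : gq a r (m + 1) ≤ gq a r n := gq_mono (by omega)
      omega
  intro m n he
  rcases lt_trichotomy m n with h | h | h
  · exact absurd he (key m n h)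
  · exact h
  · exact absurd he.symm (key n m h)

include hPPtop hNNbot in
lemma gf_surjective : Function.Surjective (gf a r) := by
  intro x
  by_cases hx : 0 < a x
  · obtain ⟨n, h1, h2⟩ := gp_hits hNNbot (Nat.count (fun m => 0 < a m) x)
    refine ⟨n, ?_⟩
    rw [gf, if_pos h2, h1]
    exact Nat.nth_count hx
  · obtain ⟨n, h1, h2⟩ := gq_hits hPPtop (Nat.count (fun m => a m ≤ 0) x)
    refine ⟨n, ?_⟩
    rw [gf, if_neg h2, h1]
    exact Nat.nth_count (not_lt.1 hx)

include hP hN in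
lemma gf_typeR_aux {i j : ℕ} (hlt : gf a r i < gf a r j)
    (hsign : (0 < a (gf a r i) ∧ 0 < a (gf a r j)) ∨ (a (gf a r i) ≤ 0 ∧ a (gf a r j) ≤ 0)) :
    i < j := by
  rcases hsign with ⟨h1, h2⟩ | ⟨h1, h2⟩
  · have hi : gs a r i ≤ r := by
      by_contra hc
      rw [gf, if_neg hc] at h1
      exact absurd (a_nidx_nonpos hN _) (not_le.2 h1)
    have hj : gs a r j ≤ r := by
      by_contra hc
      rw [gf, if_neg hc] at h2
      exact absurd (a_nidx_nonpos hN _) (not_le.2 h2)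
    rw [gf, if_pos hi, gf, if_pos hj] at hlt
    have h3 : gp a r i < gp a r j := (Nat.nth_lt_nth hP).1 hlt
    by_contra hc
    push_neg at hc
    have := gp_mono (a := a) (r := r) hc
    omega
  · have hi : ¬ gs a r i ≤ r := by
      intro hc
      rw [gf, if_pos hc] at h1
      exact absurd (a_pidx_pos hP (gp a r i)) (not_lt.2 h1)
    have hj : ¬ gs a r j ≤ r := by
      intro hc
      rw [gf, if_pos hc] at h2
      exact absurd (a_pidx_pos hP (gp a r j)) (not_lt.2 h2)
    rw [gf, if_neg hi, gf, if_neg hj] at hlt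
    have h3 : gq a r i < gq a r j := (Nat.nth_lt_nth hN).1 hlt
    by_contra hc
    push_neg at hc
    have := gq_mono (a := a) (r := r) hc
    omega

include hP hN hPPtop hNNbot in
lemma gs_conv (hzero : Tendsto a atTop (nhds 0)) : Tendsto (gs a r) atTop (nhds r) := by
  rw [Metric.tendsto_atTop]
  intro ε hε
  set δ := ε / 2 with hδdef
  have hδ : 0 < δ := by positivity
  obtain ⟨Nδ, hNδ⟩ := Metric.tendsto_atTop.1 hzero δ hδ
  have hterm : ∀ m, Nδ ≤ m → |a m| < δ := by
    intro m hm
    have := hNδ m hm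
    rwa [Real.dist_eq, sub_zero] at this
  obtain ⟨N1, hN1⟩ := Filter.tendsto_atTop_atTop.1 (gp_tendsto hNNbot) Nδ
  obtain ⟨N2, hN2⟩ := Filter.tendsto_atTop_atTop.1 (gq_tendsto hPPtop) Nδ
  set N3 := max N1 N2 with hN3
  have hstep_pos : ∀ n, N3 ≤ n → gs a r n ≤ r →
      0 < gs a r (n + 1) - gs a r n ∧ gs a r (n + 1) - gs a r n < δ := by
    intro n hn h
    rw [gs_succ_pos h]
    have hidx : Nδ ≤ pidx a (gp a r n) := by
      have h1 : Nδ ≤ gp a r n := hN1 n (le_trans (le_max_left _ _) hn)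
      have h2 : gp a r n ≤ pidx a (gp a r n) := (Nat.nth_strictMono hP).le_apply
      omega
    have h3 := hterm _ hidx
    have h4 := a_pidx_pos hP (gp a r n)
    rw [abs_lt] at h3
    constructor <;> linarith
  have hstep_neg : ∀ n, N3 ≤ n → ¬ gs a r n ≤ r →
      gs a r (n + 1) - gs a r n ≤ 0 ∧ -δ < gs a r (n + 1) - gs a r n := by
    intro n hn h
    rw [gs_succ_neg h]
    have hidx : Nδ ≤ nidx a (gq a r n) := by
      have h1 : Nδ ≤ gq a r n := hN2 n (le_trans (le_max_right _ _) hn)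
      have h2 : gq a r n ≤ nidx a (gq a r n) := (Nat.nth_strictMono hN).le_apply
      omega
    have h3 := hterm _ hidx
    have h4 := a_nidx_nonpos hN (gq a r n)
    rw [abs_lt] at h3
    constructor <;> linarith
  obtain ⟨n1, hn1N, hgs1⟩ := exists_pos_step hNNbot N3
  have hexneg : ∃ d, ¬ gs a r (n1 + 1 + d) ≤ r := by
    obtain ⟨n2, hn2a, hn2b⟩ := exists_neg_step hPPtop (n1 + 1)
    exact ⟨n2 - (n1 + 1), by rw [show n1 + 1 + (n2 - (n1 + 1)) = n2 by omega]; exact hn2b⟩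
  set d0 := Nat.find hexneg with hd0
  set m := n1 + 1 + d0 with hm
  have hmneg : ¬ gs a r m ≤ r := Nat.find_spec hexneg
  have hprevle : gs a r (m - 1) ≤ r := by
    rcases Nat.eq_zero_or_pos d0 with h | h
    · have : m - 1 = n1 := by omega
      rwa [this]
    · have h2 := Nat.find_min hexneg (m := d0 - 1) (by omega)
      rw [not_not] at h2
      rwa [show n1 + 1 + (d0 - 1) = m - 1 by omega] at h2
  have hm1 : N3 ≤ m - 1 := by omega
  have hcross : |gs a r m - r| < δ := by
    have hs := hstep_pos (m - 1) hm1 hprevle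
    rw [show m - 1 + 1 = m by omega] at hs
    rw [abs_lt]
    push_neg at hmneg
    constructor <;> linarith
  have hinv : ∀ d, |gs a r (m + d) - r| ≤ δ := by
    intro d
    induction d with
    | zero => simpa using le_of_lt hcross
    | succ d ih =>
      have hnd : N3 ≤ m + d := by omega
      rw [show m + (d + 1) = (m + d) + 1 by omega]
      by_cases h : gs a r (m + d) ≤ r
      · have hs := hstep_pos (m + d) hnd h
        rw [abs_le] at ih ⊢
        constructor <;> linarith
      · have hs := hstep_neg (m + d) hnd h
        rw [abs_le] at ih ⊢
        push_neg at h
        constructor <;> linarith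
  refine ⟨m, fun n hn => ?_⟩
  have hfin := hinv (n - m)
  rw [show m + (n - m) = n by omega] at hfin
  rw [Real.dist_eq]
  calc |gs a r n - r| ≤ δ := hfin
  _ < ε := by rw [hδdef]; linarith

lemma gf_image : ∀ n, (range (n + 1)).image (gf a r) =
    (range (gp a r (n + 1))).image (pidx a) ∪ (range (gq a r (n + 1))).image (nidx a) := by
  intro n
  induction n with
  | zero =>
    by_cases h : gs a r 0 ≤ r
    · have h1 : gp a r 1 = 1 := by rw [gp_succ_pos h, gp_zero]
      have h2 : gq a r 1 = 0 := by rw [gq_succ_pos h, gq_zero]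
      rw [h1, h2]
      have h3 : gf a r 0 = pidx a 0 := by rw [gf, if_pos h, gp_zero]
      simp [Finset.range_one, h3]
    · have h1 : gp a r 1 = 0 := by rw [gp_succ_neg h, gp_zero]
      have h2 : gq a r 1 = 1 := by rw [gq_succ_neg h, gq_zero]
      rw [h1, h2]
      have h3 : gf a r 0 = nidx a 0 := by rw [gf, if_neg h, gq_zero]
      simp [Finset.range_one, h3]
  | succ n ih =>
    rw [Finset.range_add_one, Finset.image_insert, ih]
    by_cases h : gs a r (n + 1) ≤ r
    · rw [gp_succ_pos h, gq_succ_pos h, Finset.range_add_one, Finset.image_insert,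
        Finset.insert_union]
      congr 1
      rw [gf, if_pos h]
    · rw [gp_succ_neg h, gq_succ_neg h, Finset.range_add_one, Finset.image_insert,
        Finset.union_insert]
      congr 1
      rw [gf, if_neg h]

include hP hN in
lemma blockCount_union_le {p q : ℕ} (hp : 1 ≤ p) (hq : 1 ≤ q) :
    blockCount ((range p).image (pidx a) ∪ (range q).image (nidx a)) ≤
      2 + #((Ioc (nidx a (q - 1)) (pidx a (p - 1))).filter (EnPos a))
        + #((Ioc (pidx a (p - 1)) (nidx a (q - 1))).filter (EnNeg a)) := by
  set U := (range p).image (pidx a) ∪ (range q).image (nidx a) with hU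
  set FP := pidx a (p - 1) with hFP
  set FN := nidx a (q - 1) with hFN
  set X := (Ioc FN FP).filter (EnPos a) with hX
  set Y := (Ioc FP FN).filter (EnNeg a) with hY
  have hsub : U.filter (fun x => x + 1 ∉ U) ⊆ insert FP (insert FN (X ∪ Y)) := by
    intro x hx
    rw [Finset.mem_filter] at hx
    obtain ⟨hxU, hxn⟩ := hx
    rw [hU, Finset.mem_union] at hxU
    simp only [Finset.mem_insert, Finset.mem_union]
    rcases hxU with hpos | hneg
    · obtain ⟨s, hs, rfl⟩ := Finset.mem_image.1 hpos
      rw [Finset.mem_range] at hs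
      have hxa : 0 < a (pidx a s) := a_pidx_pos hP s
      have hxFP : pidx a s ≤ FP := Nat.nth_monotone hP (by omega)
      by_cases h1 : 0 < a (pidx a s + 1)
      · left
        by_contra hne
        have hlt : pidx a s < FP := lt_of_le_of_ne hxFP hne
        have hcnt : Nat.count (fun m => 0 < a m) (pidx a s + 1) ≤ p - 1 := by
          have hc1 := Nat.count_monotone (fun m => 0 < a m)
            (show pidx a s + 1 ≤ FP by omega)
          have hc2 : Nat.count (fun m => 0 < a m) FP = p - 1 :=
            Nat.count_nth_of_infinite hP _
          omega
        have hmem : pidx a s + 1 ∈ U := by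
          rw [hU, Finset.mem_union]
          left
          exact Finset.mem_image.2 ⟨_, Finset.mem_range.2 (by omega), Nat.nth_count h1⟩
        exact absurd hmem hxn
      · have hEn : EnPos a (pidx a s) := ⟨hxa, not_lt.1 h1⟩
        have hFNlt : FN < pidx a s := by
          rcases lt_trichotomy (pidx a s) FN with h2 | h2 | h2
          · exfalso
            have hcnt : Nat.count (fun m => a m ≤ 0) (pidx a s + 1) ≤ q - 1 := by
              have hc1 := Nat.count_monotone (fun m => a m ≤ 0)
                (show pidx a s + 1 ≤ FN by omega)
              have hc2 : Nat.count (fun m => a m ≤ 0) FN = q - 1 :=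
                Nat.count_nth_of_infinite hN _
              omega
            have hmem : pidx a s + 1 ∈ U := by
              rw [hU, Finset.mem_union]
              right
              exact Finset.mem_image.2 ⟨_, Finset.mem_range.2 (by omega),
                Nat.nth_count (not_lt.1 h1)⟩
            exact absurd hmem hxn
          · exfalso
            have h3 : a FN ≤ 0 := a_nidx_nonpos hN (q - 1)
            rw [← h2] at h3
            exact absurd hxa (not_lt.2 h3)
          · exact h2
        right; right; left
        rw [hX, Finset.mem_filter, Finset.mem_Ioc]
        exact ⟨⟨hFNlt, hxFP⟩, hEn⟩
    · obtain ⟨s, hs, rfl⟩ := Finset.mem_image.1 hneg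
      rw [Finset.mem_range] at hs
      have hxa : a (nidx a s) ≤ 0 := a_nidx_nonpos hN s
      have hxFN : nidx a s ≤ FN := Nat.nth_monotone hN (by omega)
      by_cases h1 : a (nidx a s + 1) ≤ 0
      · right; left
        by_contra hne
        have hlt : nidx a s < FN := lt_of_le_of_ne hxFN hne
        have hcnt : Nat.count (fun m => a m ≤ 0) (nidx a s + 1) ≤ q - 1 := by
          have hc1 := Nat.count_monotone (fun m => a m ≤ 0)
            (show nidx a s + 1 ≤ FN by omega)
          have hc2 : Nat.count (fun m => a m ≤ 0) FN = q - 1 :=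
            Nat.count_nth_of_infinite hN _
          omega
        have hmem : nidx a s + 1 ∈ U := by
          rw [hU, Finset.mem_union]
          right
          exact Finset.mem_image.2 ⟨_, Finset.mem_range.2 (by omega), Nat.nth_count h1⟩
        exact absurd hmem hxn
      · have hEn : EnNeg a (nidx a s) := ⟨hxa, not_le.1 h1⟩
        have hFPlt : FP < nidx a s := by
          rcases lt_trichotomy (nidx a s) FP with h2 | h2 | h2
          · exfalso
            have hcnt : Nat.count (fun m => 0 < a m) (nidx a s + 1) ≤ p - 1 := by
              have hc1 := Nat.count_monotone (fun m => 0 < a m)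
                (show nidx a s + 1 ≤ FP by omega)
              have hc2 : Nat.count (fun m => 0 < a m) FP = p - 1 :=
                Nat.count_nth_of_infinite hP _
              omega
            have hmem : nidx a s + 1 ∈ U := by
              rw [hU, Finset.mem_union]
              left
              exact Finset.mem_image.2 ⟨_, Finset.mem_range.2 (by omega),
                Nat.nth_count (not_le.1 h1)⟩
            exact absurd hmem hxn
          · exfalso
            have h3 : 0 < a FP := a_pidx_pos hP (p - 1)
            rw [← h2] at h3
            exact absurd h3 (not_lt.2 hxa)
          · exact h2
        right; right; right
        rw [hY, Finset.mem_filter, Finset.mem_Ioc]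
        exact ⟨⟨hFPlt, hxFN⟩, hEn⟩
  have c0 := Finset.card_le_card hsub
  have c1 := Finset.card_insert_le FP (insert FN (X ∪ Y))
  have c2 := Finset.card_insert_le FN (X ∪ Y)
  have c3 := Finset.card_union_le X Y
  have : blockCount U = #(U.filter (fun x => x + 1 ∉ U)) := rfl
  omega

end Greedy

/-! ### gap bounds for the greedy permutation -/

include hP hN h0 in
lemma gap_bound_pos {C0 i0N kN NB T0 : ℕ} {M0 Ms εN : ℝ} {p q : ℕ}
    (hεN : 0 < εN)
    (hwN : ∀ t, i0N ≤ t → CN a (t + kN + 1) - CN a t ≤ -εN)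
    (hA1 : ∀ j, T0 ≤ j → -M0 ≤ CP a (j + 1) + CN a (j - C0 + 1))
    (hNB : Ms + M0 ≤ (NB : ℝ) * εN)
    (hT0 : i0N ≤ T0)
    (hp : 1 ≤ p) (hq : 1 ≤ q)
    (hps : |PP a p + NN a q| ≤ Ms)
    (hbig : qe a T0 ≤ nidx a (q - 1)) :
    #((Ioc (nidx a (q - 1)) (pidx a (p - 1))).filter (EnPos a)) ≤ C0 + (NB + 1) * (kN + 1) + 1 := by
  have hEP := enPos_infinite hP hN
  have hEN := enNeg_infinite hP hN
  set W := (NB + 1) * (kN + 1) with hW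
  set FP := pidx a (p - 1) with hFPd
  set FN := nidx a (q - 1) with hFNd
  set X := (Ioc FN FP).filter (EnPos a) with hXd
  by_cases hne : X.Nonempty
  · have hxsX : X.max' hne ∈ X := X.max'_mem hne
    set xs := X.max' hne with hxs
    rw [hXd, Finset.mem_filter, Finset.mem_Ioc] at hxsX
    obtain ⟨⟨hxs1, hxs2⟩, hxs3⟩ := hxsX
    set τ2 := Nat.count (EnPos a) xs with hτ2
    set τ1 := Nat.count (EnPos a) (FN + 1) with hτ1
    have hpexs : pe a τ2 = xs := Nat.nth_count hxs3
    have hτ12 : τ1 ≤ τ2 := Nat.count_monotone _ (by omega)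
    have hT0τ1 : T0 ≤ τ1 := by
      have h1 : Nat.count (EnPos a) (qe a T0) = T0 := struct_D hP hN h0 T0
      have h2 : Nat.count (EnPos a) (qe a T0) ≤ Nat.count (EnPos a) (FN + 1) :=
        Nat.count_monotone _ (by omega)
      omega
    have hXsub : X ⊆ (Icc τ1 τ2).image (pe a) := by
      intro y hy
      have hymax : y ≤ xs := Finset.le_max' X y hy
      rw [hXd, Finset.mem_filter, Finset.mem_Ioc] at hy
      obtain ⟨⟨hy1, hy2⟩, hy3⟩ := hy
      refine Finset.mem_image.2 ⟨Nat.count (EnPos a) y, ?_, Nat.nth_count hy3⟩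
      rw [Finset.mem_Icc]
      exact ⟨Nat.count_monotone _ (by omega), Nat.count_monotone _ hymax⟩
    have hcard : #X ≤ τ2 - τ1 + 1 := by
      calc #X ≤ #((Icc τ1 τ2).image (pe a)) := Finset.card_le_card hXsub
      _ ≤ #(Icc τ1 τ2) := Finset.card_image_le
      _ = τ2 - τ1 + 1 := by rw [Nat.card_Icc]; omega
    by_cases hbig2 : τ1 + 1 + W ≤ τ2 - C0 + 1
    · exfalso
      have hpe1 : FN + 1 ≤ pe a τ1 := Nat.le_nth_count hEP (FN + 1)
      have hqcnt : q = Nat.count (fun m => a m ≤ 0) (FN + 1) := by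
        have hmem : a FN ≤ 0 := a_nidx_nonpos hN (q - 1)
        have h6 : Nat.count (fun m => a m ≤ 0) FN = q - 1 :=
          Nat.count_nth_of_infinite hN (q - 1)
        rw [Nat.count_succ, if_pos hmem]
        omega
      have hNNq : NN a q = ∑ x ∈ range (FN + 1), npart a x := by rw [split_neg, ← hqcnt]
      have hv2 : CN a (τ1 + 1) ≤ NN a q := by
        rw [hNNq, ← (pp_np_sums hP hN h0 τ1).2.2.2]
        apply sum_subset_nonpos
        · intro x hx
          rw [Finset.mem_range] at hx ⊢
          omega
        · intro x _ _
          exact npart_nonpos x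
      have hpcnt : p = Nat.count (fun m => 0 < a m) (FP + 1) := by
        have hmem : 0 < a FP := a_pidx_pos hP (p - 1)
        have h6 : Nat.count (fun m => 0 < a m) FP = p - 1 :=
          Nat.count_nth_of_infinite hP (p - 1)
        rw [Nat.count_succ, if_pos hmem]
        omega
      have hPPp : PP a p = ∑ x ∈ range (FP + 1), ppart a x := by rw [split_pos, ← hpcnt]
      have hv1 : CP a (τ2 + 1) ≤ PP a p := by
        rw [hPPp, ← (pp_np_sums hP hN h0 τ2).2.1, hpexs]
        apply Finset.sum_le_sum_of_subset_of_nonneg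
        · intro x hx
          rw [Finset.mem_range] at hx ⊢
          omega
        · intro x _ _
          exact ppart_nonneg x
      have hdecay := CN_decay hwN (NB + 1) (τ1 + 1) (by omega)
      rw [hW] at hbig2
      have hanti : CN a (τ2 - C0 + 1) ≤ CN a (τ1 + 1 + (NB + 1) * (kN + 1)) :=
        CN_anti hP hN h0 hbig2
      have hA1j := hA1 τ2 (by omega)
      have habs := abs_le.1 hps
      have hcast : ((NB : ℝ) + 1) * εN = (NB : ℝ) * εN + εN := by ring
      push_cast at hdecay
      linarith
    · omega
  · rw [Finset.not_nonempty_iff_eq_empty] at hne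
    rw [hne]
    simp

include hP hN h0 in
lemma gap_bound_neg {C0 i0P kP NB T0 : ℕ} {M0 Ms εP : ℝ} {p q : ℕ}
    (hεP : 0 < εP)
    (hwP : ∀ t, i0P ≤ t → εP ≤ CP a (t + kP + 1) - CP a t)
    (hA2 : ∀ j, T0 ≤ j → CN a (j + 1) + CP a (j - C0) ≤ M0)
    (hNB : Ms + M0 ≤ (NB : ℝ) * εP)
    (hT0 : i0P ≤ T0)
    (hp : 1 ≤ p) (hq : 1 ≤ q)
    (hps : |PP a p + NN a q| ≤ Ms)
    (hbig : pe a T0 ≤ pidx a (p - 1)) :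
    #((Ioc (pidx a (p - 1)) (nidx a (q - 1))).filter (EnNeg a)) ≤ C0 + (NB + 1) * (kP + 1) + 1 := by
  have hEP := enPos_infinite hP hN
  have hEN := enNeg_infinite hP hN
  set W := (NB + 1) * (kP + 1) with hW
  set FP := pidx a (p - 1) with hFPd
  set FN := nidx a (q - 1) with hFNd
  set X := (Ioc FP FN).filter (EnNeg a) with hXd
  by_cases hne : X.Nonempty
  · have hxsX : X.max' hne ∈ X := X.max'_mem hne
    set xs := X.max' hne with hxs
    rw [hXd, Finset.mem_filter, Finset.mem_Ioc] at hxsX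
    obtain ⟨⟨hxs1, hxs2⟩, hxs3⟩ := hxsX
    set τ2 := Nat.count (EnNeg a) xs with hτ2
    set τ1 := Nat.count (EnNeg a) (FP + 1) with hτ1
    have hqexs : qe a τ2 = xs := Nat.nth_count hxs3
    have hτ12 : τ1 ≤ τ2 := Nat.count_monotone _ (by omega)
    have hT0τ1 : T0 ≤ τ1 := by
      have hq0 : EnNeg a (qe a T0) := Nat.nth_mem_of_infinite hEN T0
      have h0b : Nat.count (EnNeg a) (qe a T0) = T0 := Nat.count_nth_of_infinite hEN T0
      have h1 : Nat.count (EnNeg a) (qe a T0 + 1) = T0 + 1 := by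
        rw [Nat.count_succ, if_pos hq0, h0b]
      have hqlt : qe a T0 < pe a T0 := (struct hP hN h0 T0).1
      have h2 : Nat.count (EnNeg a) (qe a T0 + 1) ≤ Nat.count (EnNeg a) (FP + 1) :=
        Nat.count_monotone _ (by omega)
      omega
    have hXsub : X ⊆ (Icc τ1 τ2).image (qe a) := by
      intro y hy
      have hymax : y ≤ xs := Finset.le_max' X y hy
      rw [hXd, Finset.mem_filter, Finset.mem_Ioc] at hy
      obtain ⟨⟨hy1, hy2⟩, hy3⟩ := hy
      refine Finset.mem_image.2 ⟨Nat.count (EnNeg a) y, ?_, Nat.nth_count hy3⟩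
      rw [Finset.mem_Icc]
      exact ⟨Nat.count_monotone _ (by omega), Nat.count_monotone _ hymax⟩
    have hcard : #X ≤ τ2 - τ1 + 1 := by
      calc #X ≤ #((Icc τ1 τ2).image (qe a)) := Finset.card_le_card hXsub
      _ ≤ #(Icc τ1 τ2) := Finset.card_image_le
      _ = τ2 - τ1 + 1 := by rw [Nat.card_Icc]; omega
    by_cases hbig2 : τ1 + W ≤ τ2 - C0
    · exfalso
      have hqe1 : FP + 1 ≤ qe a τ1 := Nat.le_nth_count hEN (FP + 1)
      have hpcnt : p = Nat.count (fun m => 0 < a m) (FP + 1) := by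
        have hmem : 0 < a FP := a_pidx_pos hP (p - 1)
        have h6 : Nat.count (fun m => 0 < a m) FP = p - 1 :=
          Nat.count_nth_of_infinite hP (p - 1)
        rw [Nat.count_succ, if_pos hmem]
        omega
      have hPPp : PP a p = ∑ x ∈ range (FP + 1), ppart a x := by rw [split_pos, ← hpcnt]
      have hv2 : PP a p ≤ CP a τ1 := by
        rw [hPPp, ← (pp_np_sums hP hN h0 τ1).1]
        apply Finset.sum_le_sum_of_subset_of_nonneg
        · intro x hx
          rw [Finset.mem_range] at hx ⊢
          omega
        · intro x _ _
          exact ppart_nonneg x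
      have hqcnt : q = Nat.count (fun m => a m ≤ 0) (FN + 1) := by
        have hmem : a FN ≤ 0 := a_nidx_nonpos hN (q - 1)
        have h6 : Nat.count (fun m => a m ≤ 0) FN = q - 1 :=
          Nat.count_nth_of_infinite hN (q - 1)
        rw [Nat.count_succ, if_pos hmem]
        omega
      have hNNq : NN a q = ∑ x ∈ range (FN + 1), npart a x := by rw [split_neg, ← hqcnt]
      have hv1 : NN a q ≤ CN a (τ2 + 1) := by
        rw [hNNq, ← (pp_np_sums hP hN h0 τ2).2.2.1, hqexs]
        apply sum_subset_nonpos
        · intro x hx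
          rw [Finset.mem_range] at hx ⊢
          omega
        · intro x _ _
          exact npart_nonpos x
      have hgrow := CP_growth hwP (NB + 1) τ1 (by omega)
      rw [hW] at hbig2
      have hmono : CP a (τ1 + (NB + 1) * (kP + 1)) ≤ CP a (τ2 - C0) :=
        CP_mono hP hN h0 hbig2
      have hA2j := hA2 τ2 (by omega)
      have habs := abs_le.1 hps
      have hcast : ((NB : ℝ) + 1) * εP = (NB : ℝ) * εP + εP := by ring
      push_cast at hgrow
      linarith
    · omega
  · rw [Finset.not_nonempty_iff_eq_empty] at hne
    rw [hne]
    simp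

end CDiv


open CDiv in
/-- If a conditionally divergent series (with `a 0 ≤ 0`, infinitely
many positive and nonpositive terms) can be fixed by some type R λ-permutation
and satisfies both `ST_P` and `ST_N`, then `Z_R = ℝ`. -/
theorem statement1 (a : ℕ → ℝ) (h0 : a 0 ≤ 0)
    (hP : {n : ℕ | 0 < a n}.Infinite) (hN : {n : ℕ | a n ≤ 0}.Infinite)
    (hcd : CondDivergent a) (hne : (ZR a).Nonempty)
    (hstp : STP a) (hstn : STN a) :
    ZR a = Set.univ := by
  ext r
  simp only [Set.mem_univ, iff_true]
  -- terms tend to zero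
  obtain ⟨σ1, hσ1⟩ := hcd.2
  have hzero : Tendsto a atTop (nhds 0) := tendsto_a_zero σ1 hσ1
  -- the given λ-permutation
  obtain ⟨r0, σ0, ⟨hR0, ⟨C0, hBBN⟩, hconv0⟩, _⟩ := hne
  obtain ⟨L0, hL0⟩ := hconv0
  obtain ⟨M0, hM0⟩ := exists_bound_of_tendsto hL0
  -- window bounds from STP and STN
  obtain ⟨kP, εP, hεP, i0P, hSP⟩ := hstp
  obtain ⟨kN, εN, hεN, i0N, hSN⟩ := hstn
  have hwP : ∀ t, i0P ≤ t → εP ≤ CP a (t + kP + 1) - CP a t := by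
    intro t ht
    have h1 := hSP (t + 1) (by omega)
    have h2 : SP a (t + 1) (t + 1 + kP) = CP a (t + 1 + kP) - CP a (t + 1 - 1) :=
      SP_eq hP hN h0 (by omega) (by omega)
    rw [h2] at h1
    simp only [Nat.add_sub_cancel] at h1
    rw [show t + 1 + kP = t + kP + 1 by omega] at h1
    linarith
  have hwN : ∀ t, i0N ≤ t → CN a (t + kN + 1) - CN a t ≤ -εN := by
    intro t ht
    have h1 := hSN (t + 1) (by omega)
    have h2 : SN a (t + 1) (t + 1 + kN) = CN a (t + 1 + kN) - CN a (t + 1 - 1) :=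
      SN_eq hP hN h0 (by omega) (by omega)
    rw [h2] at h1
    simp only [Nat.add_sub_cancel] at h1
    rw [show t + 1 + kN = t + kN + 1 by omega] at h1
    linarith
  have hPPtop : Tendsto (PP a) atTop atTop := PP_tendsto hP hN h0 hεP hwP
  have hNNbot : Tendsto (NN a) atTop atBot := NN_tendsto hP hN h0 hεN hwN
  -- balance inequalities from the given permutation
  obtain ⟨J1, hA1⟩ := balance_A1 hP hN h0 hR0 hBBN hM0
  obtain ⟨J2, hA2⟩ := balance_A2 hP hN h0 hR0 hBBN hM0
  -- the greedy permutation targeting r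
  have hinj : Function.Injective (gf a r) := gf_injective hP hN
  have hsurj : Function.Surjective (gf a r) := gf_surjective hPPtop hNNbot
  set σg : Equiv.Perm ℕ := Equiv.ofBijective (gf a r) ⟨hinj, hsurj⟩ with hσg
  have hconv : Tendsto (gs a r) atTop (nhds r) := gs_conv hP hN hPPtop hNNbot hzero
  have hct : ConvergesTo (fun n => a (σg n)) r := by
    rw [ConvergesTo]
    exact hconv.congr (fun n => (gsum_eq n).symm)
  obtain ⟨Ms, hMs⟩ := exists_bound_of_tendsto hconv
  have hTypeR : IsTypeR a σg := fun i j hlt hsign => gf_typeR_aux hP hN hlt hsign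
  -- block number bound
  obtain ⟨NBN, hNBN'⟩ := exists_nat_ge ((Ms + M0) / εN)
  have hNBN : Ms + M0 ≤ (NBN : ℝ) * εN := by
    rw [div_le_iff₀ hεN] at hNBN'
    linarith
  obtain ⟨NBP, hNBP'⟩ := exists_nat_ge ((Ms + M0) / εP)
  have hNBP : Ms + M0 ≤ (NBP : ℝ) * εP := by
    rw [div_le_iff₀ hεP] at hNBP'
    linarith
  set T0 := max (max i0N J1) (max i0P J2) with hT0def
  set D1 := C0 + (NBN + 1) * (kN + 1) + 1 with hD1
  set D2 := C0 + (NBP + 1) * (kP + 1) + 1 with hD2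
  obtain ⟨Np, hNp⟩ := Filter.tendsto_atTop_atTop.1 (gp_tendsto hNNbot) (pe a T0 + 1)
  obtain ⟨Nq, hNq⟩ := Filter.tendsto_atTop_atTop.1 (gq_tendsto hPPtop) (qe a T0 + 1)
  have hbound : ∀ n, max Np Nq ≤ n → blockCount ((range (n + 1)).image (σg : ℕ → ℕ)) ≤
      2 + D1 + D2 := by
    intro n hn
    have hcoe : (σg : ℕ → ℕ) = gf a r := rfl
    have himg : (range (n + 1)).image (σg : ℕ → ℕ) =
        (range (gp a r (n + 1))).image (pidx a) ∪ (range (gq a r (n + 1))).image (nidx a) := by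
      rw [hcoe]
      exact gf_image n
    have hgpn : pe a T0 + 1 ≤ gp a r (n + 1) := hNp (n + 1) (by omega)
    have hgqn : qe a T0 + 1 ≤ gq a r (n + 1) := hNq (n + 1) (by omega)
    have hp1 : 1 ≤ gp a r (n + 1) := by omega
    have hq1 : 1 ≤ gq a r (n + 1) := by omega
    have hps : |PP a (gp a r (n + 1)) + NN a (gq a r (n + 1))| ≤ Ms := hMs (n + 1)
    have hbig1 : qe a T0 ≤ nidx a (gq a r (n + 1) - 1) := by
      have h2 : gq a r (n + 1) - 1 ≤ nidx a (gq a r (n + 1) - 1) :=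
        (Nat.nth_strictMono hN).le_apply
      omega
    have hbig2 : pe a T0 ≤ pidx a (gp a r (n + 1) - 1) := by
      have h2 : gp a r (n + 1) - 1 ≤ pidx a (gp a r (n + 1) - 1) :=
        (Nat.nth_strictMono hP).le_apply
      omega
    have hgap1 := gap_bound_pos hP hN h0 hεN hwN
      (fun j hj => hA1 j (by omega)) hNBN (by omega) hp1 hq1 hps hbig1
    have hgap2 := gap_bound_neg hP hN h0 hεP hwP
      (fun j hj => hA2 j (by omega)) hNBP (by omega) hp1 hq1 hps hbig2
    have hBC := blockCount_union_le hP hN hp1 hq1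
    rw [himg]
    omega
  have hpre : ∀ N : ℕ, ∃ B, ∀ n, n < N →
      blockCount ((range (n + 1)).image (σg : ℕ → ℕ)) ≤ B := by
    intro N
    induction N with
    | zero => exact ⟨0, fun n hn => absurd hn (Nat.not_lt_zero n)⟩
    | succ N ih =>
      obtain ⟨B, hB⟩ := ih
      refine ⟨max B (blockCount ((range (N + 1)).image (σg : ℕ → ℕ))), fun n hn => ?_⟩
      rcases Nat.lt_succ_iff_lt_or_eq.1 hn with h | h
      · exact le_trans (hB n h) (le_max_left _ _)
      · subst h
        exact le_max_right _ _
  obtain ⟨B, hB⟩ := hpre (max Np Nq)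
  have hBBNg : HasBBN σg (max B (2 + D1 + D2)) := by
    intro n
    rcases lt_or_ge n (max Np Nq) with h | h
    · exact le_trans (hB n h) (le_max_left _ _)
    · exact le_trans (hbound n h) (le_max_right _ _)
  exact ⟨σg, ⟨hTypeR, ⟨max B (2 + D1 + D2), hBBNg⟩, ⟨r, hct⟩⟩, hct⟩
end
end

section
/- Let S = ∑_{n=0}^∞ a_n be a conditionally divergent series of real numbers with a_0 ≤ 0, such that a_n > 0 for infinitely many n and a_n ≤ 0 for infinitely many n. Suppose the set Z_R = { r ∈ ℝ : ∑_{n=0}^∞ a_{σ(n)} = r for some type R λ-permutation σ of S } is nonempty, and suppose S violates ST_P or violates ST_N. Then Z_R is a singleton: any two type R λ-permutations of S rearrange S to the same sum. -/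
open Filter Finset

noncomputable section
open scoped Classical

-- ===== auxiliary development =====

def pPS (a : ℕ → ℝ) (n : ℕ) : Prop := 0 < a n ∧ (n = 0 ∨ a (n - 1) ≤ 0)
def pPE (a : ℕ → ℝ) (n : ℕ) : Prop := 0 < a n ∧ a (n + 1) ≤ 0
def pNS (a : ℕ → ℝ) (n : ℕ) : Prop := a n ≤ 0 ∧ (n = 0 ∨ 0 < a (n - 1))
def pNE (a : ℕ → ℝ) (n : ℕ) : Prop := a n ≤ 0 ∧ 0 < a (n + 1)

variable {a : ℕ → ℝ}

lemma infPE (hP : {n : ℕ | 0 < a n}.Infinite) (hN : {n : ℕ | a n ≤ 0}.Infinite) :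
    (setOf (pPE a)).Infinite := by
  by_contra hfin
  rw [Set.not_infinite] at hfin
  obtain ⟨B, hB⟩ := hfin.bddAbove
  obtain ⟨n₀, hn₀, hBn₀⟩ := hP.exists_gt B
  have key : ∀ m, n₀ ≤ m → 0 < a m := by
    intro m hm
    induction m, hm using Nat.le_induction with
    | base => exact hn₀
    | succ m hm ih =>
      by_contra h
      push_neg at h
      have : pPE a m := ⟨ih, h⟩
      exact absurd (hB this) (by omega)
  obtain ⟨m, hm, hmg⟩ := hN.exists_gt n₀
  exact absurd (key m hmg.le) (not_lt.2 hm)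

lemma infNE (hP : {n : ℕ | 0 < a n}.Infinite) (hN : {n : ℕ | a n ≤ 0}.Infinite) :
    (setOf (pNE a)).Infinite := by
  by_contra hfin
  rw [Set.not_infinite] at hfin
  obtain ⟨B, hB⟩ := hfin.bddAbove
  obtain ⟨n₀, hn₀, hBn₀⟩ := hN.exists_gt B
  have key : ∀ m, n₀ ≤ m → a m ≤ 0 := by
    intro m hm
    induction m, hm using Nat.le_induction with
    | base => exact hn₀
    | succ m hm ih =>
      by_contra h
      push_neg at h
      have : pNE a m := ⟨ih, h⟩
      exact absurd (hB this) (by omega)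
  obtain ⟨m, hm, hmg⟩ := hP.exists_gt n₀
  exact absurd (key m hmg.le) (not_le.2 hm)

lemma pPS_succ_iff (n : ℕ) : pPS a (n + 1) ↔ pNE a n := by
  simp only [pPS, pNE]
  constructor
  · rintro ⟨h1, h2⟩
    rcases h2 with h | h
    · omega
    · exact ⟨by simpa using h, h1⟩
  · rintro ⟨h1, h2⟩
    exact ⟨h2, Or.inr (by simpa using h1)⟩

lemma pNS_succ_iff (n : ℕ) : pNS a (n + 1) ↔ pPE a n := by
  simp only [pNS, pPE]
  constructor
  · rintro ⟨h1, h2⟩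
    rcases h2 with h | h
    · omega
    · exact ⟨by simpa using h, h1⟩
  · rintro ⟨h1, h2⟩
    exact ⟨h2, Or.inr (by simpa using h1)⟩

lemma infPS (hP : {n : ℕ | 0 < a n}.Infinite) (hN : {n : ℕ | a n ≤ 0}.Infinite) :
    (setOf (pPS a)).Infinite := by
  have h := (infNE hP hN).image (f := fun n => n + 1)
    (Set.injOn_of_injective (fun x y => by omega))
  refine h.mono ?_
  rintro x ⟨y, hy, rfl⟩
  exact (pPS_succ_iff y).2 hy

lemma infNS (hP : {n : ℕ | 0 < a n}.Infinite) (hN : {n : ℕ | a n ≤ 0}.Infinite) :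
    (setOf (pNS a)).Infinite := by
  have h := (infPE hP hN).image (f := fun n => n + 1)
    (Set.injOn_of_injective (fun x y => by omega))
  refine h.mono ?_
  rintro x ⟨y, hy, rfl⟩
  exact (pNS_succ_iff y).2 hy

lemma not_pPS_zero (h0 : a 0 ≤ 0) : ¬ pPS a 0 := fun h => absurd h.1 (not_lt.2 h0)

lemma pNS_zero (h0 : a 0 ≤ 0) : pNS a 0 := ⟨h0, Or.inl rfl⟩

lemma cPSNE (h0 : a 0 ≤ 0) (n : ℕ) : Nat.count (pPS a) (n + 1) = Nat.count (pNE a) n := by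
  induction n with
  | zero => simp [Nat.count_succ, Nat.count_zero, not_pPS_zero h0]
  | succ n ih =>
    rw [Nat.count_succ (n := n + 1), ih, Nat.count_succ (n := n)]
    congr 1
    simp [pPS_succ_iff]

lemma cNSPE (h0 : a 0 ≤ 0) (n : ℕ) : Nat.count (pNS a) (n + 1) = Nat.count (pPE a) n + 1 := by
  induction n with
  | zero => simp [Nat.count_succ, Nat.count_zero, pNS_zero h0]
  | succ n ih =>
    rw [Nat.count_succ (n := n + 1), ih, Nat.count_succ (n := n)]
    have : pNS a (n + 1) ↔ pPE a n := pNS_succ_iff n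
    by_cases h : pPE a n <;> simp [h, this] <;> omega

lemma cNSNE (h0 : a 0 ≤ 0) (n : ℕ) :
    Nat.count (pNS a) (n + 1) = Nat.count (pNE a) n + if a n ≤ 0 then 1 else 0 := by
  induction n with
  | zero => simp [Nat.count_succ, Nat.count_zero, pNS_zero h0, pNE, h0]
  | succ n ih =>
    rw [Nat.count_succ (n := n + 1), ih, Nat.count_succ (n := n)]
    have h1 : pNS a (n + 1) ↔ (a (n+1) ≤ 0 ∧ 0 < a n) := by
      rw [pNS_succ_iff]; exact ⟨fun h => ⟨h.2, h.1⟩, fun h => ⟨h.2, h.1⟩⟩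
    have h2 : pNE a n ↔ (a n ≤ 0 ∧ 0 < a (n+1)) := Iff.rfl
    rcases le_or_gt (a n) 0 with h | h <;> rcases le_or_gt (a (n+1)) 0 with h' | h'
    · simp [h1, h2, h, h', not_lt.2 h, not_lt.2 h']
    · simp [h1, h2, h, h', not_lt.2 h, not_le.2 h']
    · simp [h1, h2, h', not_le.2 h, not_lt.2 h']
    · simp [h1, h2, not_le.2 h, not_le.2 h']

lemma cPSPE (h0 : a 0 ≤ 0) (n : ℕ) :
    Nat.count (pPS a) (n + 1) = Nat.count (pPE a) n + if 0 < a n then 1 else 0 := by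
  induction n with
  | zero => simp [Nat.count_succ, Nat.count_zero, not_pPS_zero h0, pPE, not_lt.2 h0]
  | succ n ih =>
    rw [Nat.count_succ (n := n + 1), ih, Nat.count_succ (n := n)]
    have h1 : pPS a (n + 1) ↔ (0 < a (n+1) ∧ a n ≤ 0) := by
      rw [pPS_succ_iff]; exact ⟨fun h => ⟨h.2, h.1⟩, fun h => ⟨h.2, h.1⟩⟩
    have h2 : pPE a n ↔ (0 < a n ∧ a (n+1) ≤ 0) := Iff.rfl
    rcases le_or_gt (a n) 0 with h | h <;> rcases le_or_gt (a (n+1)) 0 with h' | h'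
    · simp [h1, h2, h, h', not_lt.2 h, not_lt.2 h']
    · simp [h1, h2, h, h', not_lt.2 h, not_le.2 h']
    · simp [h1, h2, h', not_le.2 h, not_lt.2 h']
    · simp [h1, h2, not_le.2 h, not_le.2 h', h, h']

section NthFacts
variable (h0 : a 0 ≤ 0) (hP : {n : ℕ | 0 < a n}.Infinite) (hN : {n : ℕ | a n ≤ 0}.Infinite)
include h0 hP hN

lemma nthPS_eq (k : ℕ) : Nat.nth (pPS a) k = Nat.nth (pNE a) k + 1 := by
  have iNE := infNE hP hN
  set m := Nat.nth (pNE a) k with hm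
  have hmem : pNE a m := Nat.nth_mem_of_infinite iNE k
  have hps : pPS a (m + 1) := (pPS_succ_iff m).2 hmem
  have hc : Nat.count (pPS a) (m + 1) = k := by
    rw [cPSNE h0]; exact Nat.count_nth_of_infinite iNE k
  rw [← hc, Nat.nth_count hps]

lemma nthNS_zero : Nat.nth (pNS a) 0 = 0 := Nat.nth_zero_of_zero (pNS_zero h0)

lemma nthNS_succ (k : ℕ) : Nat.nth (pNS a) (k + 1) = Nat.nth (pPE a) k + 1 := by
  have iPE := infPE hP hN
  set m := Nat.nth (pPE a) k with hm
  have hmem : pPE a m := Nat.nth_mem_of_infinite iPE k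
  have hns : pNS a (m + 1) := (pNS_succ_iff m).2 hmem
  have hc : Nat.count (pNS a) (m + 1) = k + 1 := by
    rw [cNSPE h0]; rw [Nat.count_nth_of_infinite iPE k]
  rw [← hc, Nat.nth_count hns]

lemma nthNS_le_nthNE (k : ℕ) : Nat.nth (pNS a) k ≤ Nat.nth (pNE a) k := by
  have iNE := infNE hP hN
  have iNS := infNS hP hN
  by_contra h
  push_neg at h
  set m := Nat.nth (pNE a) k with hm
  have hmem : pNE a m := Nat.nth_mem_of_infinite iNE k
  have h1 : Nat.count (pNS a) (m + 1) ≤ k := by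
    by_contra hc
    push_neg at hc
    have := (Nat.lt_nth_iff_count_lt iNS).1 hc
    omega
  have h2 : Nat.count (pNS a) (m + 1) = Nat.count (pNE a) m + 1 := by
    rw [cNSNE h0, if_pos hmem.1]
  have h3 : Nat.count (pNE a) m = k := Nat.count_nth_of_infinite iNE k
  omega

lemma nthPS_le_nthPE (k : ℕ) : Nat.nth (pPS a) k ≤ Nat.nth (pPE a) k := by
  have iPE := infPE hP hN
  have iPS := infPS hP hN
  by_contra h
  push_neg at h
  set m := Nat.nth (pPE a) k with hm
  have hmem : pPE a m := Nat.nth_mem_of_infinite iPE k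
  have h1 : Nat.count (pPS a) (m + 1) ≤ k := by
    by_contra hc
    push_neg at hc
    have := (Nat.lt_nth_iff_count_lt iPS).1 hc
    omega
  have h2 : Nat.count (pPS a) (m + 1) = Nat.count (pPE a) m + 1 := by
    rw [cPSPE h0, if_pos hmem.1]
  have h3 : Nat.count (pPE a) m = k := Nat.count_nth_of_infinite iPE k
  omega

lemma sign_neg_block {k n : ℕ} (h1 : Nat.nth (pNS a) k ≤ n) (h2 : n ≤ Nat.nth (pNE a) k) :
    a n ≤ 0 := by
  have iNE := infNE hP hN
  have iNS := infNS hP hN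
  by_contra h
  push_neg at h
  have hc1 : k < Nat.count (pNS a) (n + 1) := by
    rw [Nat.lt_nth_iff_count_lt iNS]
    omega
  have hc2 : Nat.count (pNE a) n ≤ k := (Nat.count_le_iff_le_nth iNE).2 h2
  have hc3 : Nat.count (pNS a) (n + 1) = Nat.count (pNE a) n := by
    rw [cNSNE h0, if_neg (not_le.2 h), add_zero]
  omega

lemma sign_pos_block {k n : ℕ} (h1 : Nat.nth (pPS a) k ≤ n) (h2 : n ≤ Nat.nth (pPE a) k) :
    0 < a n := by
  have iPE := infPE hP hN
  have iPS := infPS hP hN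
  by_contra h
  push_neg at h
  have hc1 : k < Nat.count (pPS a) (n + 1) := by
    rw [Nat.lt_nth_iff_count_lt iPS]
    omega
  have hc2 : Nat.count (pPE a) n ≤ k := (Nat.count_le_iff_le_nth iPE).2 h2
  have hc3 : Nat.count (pPS a) (n + 1) = Nat.count (pPE a) n := by
    rw [cPSPE h0, if_neg (not_lt.2 h), add_zero]
  omega

lemma pos_block_reach {x i : ℕ} (hx : 0 < a x) (hgt : Nat.nth (pPE a) i < x) :
    Nat.nth (pPS a) (i + 1) ≤ x := by
  have iPE := infPE hP hN
  have iPS := infPS hP hN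
  have hc1 : i < Nat.count (pPE a) x := (Nat.lt_nth_iff_count_lt iPE).2 hgt
  have hc2 : Nat.count (pPS a) (x + 1) = Nat.count (pPE a) x + 1 := by
    rw [cPSPE h0, if_pos hx]
  have : Nat.nth (pPS a) (i + 1) < x + 1 := by
    rw [← Nat.lt_nth_iff_count_lt iPS]
    omega
  omega

lemma neg_block_reach {x i : ℕ} (hx : a x ≤ 0) (hgt : Nat.nth (pNE a) i < x) :
    Nat.nth (pNS a) (i + 1) ≤ x := by
  have iNE := infNE hP hN
  have iNS := infNS hP hN
  have hc1 : i < Nat.count (pNE a) x := (Nat.lt_nth_iff_count_lt iNE).2 hgt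
  have hc2 : Nat.count (pNS a) (x + 1) = Nat.count (pNE a) x + 1 := by
    rw [cNSNE h0, if_pos hx]
  have : Nat.nth (pNS a) (i + 1) < x + 1 := by
    rw [← Nat.lt_nth_iff_count_lt iNS]
    omega
  omega

end NthFacts


def Efin (σ : Equiv.Perm ℕ) (n : ℕ) : Finset ℕ := (Finset.range (n + 1)).image σ

variable {a : ℕ → ℝ} {σ : Equiv.Perm ℕ}

lemma mem_Efin {n y : ℕ} : y ∈ Efin σ n ↔ ∃ j ≤ n, σ j = y := by
  simp [Efin, Finset.mem_image, Finset.mem_range, Nat.lt_succ_iff]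

lemma card_Efin (n : ℕ) : (Efin σ n).card = n + 1 := by
  rw [Efin, Finset.card_image_of_injective _ σ.injective, Finset.card_range]

lemma hasBBN_Efin {C : ℕ} (hB : HasBBN σ C) (n : ℕ) : blockCount (Efin σ n) ≤ C := hB n

lemma sigma_mem_Efin (n : ℕ) : σ n ∈ Efin σ n := mem_Efin.2 ⟨n, le_refl n, rfl⟩

lemma lemA_pos (hR : IsTypeR a σ) {n x y : ℕ} (hx : x ∈ Efin σ n) (hax : 0 < a x)
    (hay : 0 < a y) (hyx : y ≤ x) : y ∈ Efin σ n := by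
  rcases eq_or_lt_of_le hyx with rfl | hlt
  · exact hx
  obtain ⟨i, hi, rfl⟩ := mem_Efin.1 hx
  refine mem_Efin.2 ⟨σ.symm y, ?_, σ.apply_symm_apply y⟩
  have h := hR (σ.symm y) i (by rwa [σ.apply_symm_apply])
    (by rw [σ.apply_symm_apply]; exact Or.inl ⟨hay, hax⟩)
  omega

lemma lemA_neg (hR : IsTypeR a σ) {n x y : ℕ} (hx : x ∈ Efin σ n) (hax : a x ≤ 0)
    (hay : a y ≤ 0) (hyx : y ≤ x) : y ∈ Efin σ n := by
  rcases eq_or_lt_of_le hyx with rfl | hlt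
  · exact hx
  obtain ⟨i, hi, rfl⟩ := mem_Efin.1 hx
  refine mem_Efin.2 ⟨σ.symm y, ?_, σ.apply_symm_apply y⟩
  have h := hR (σ.symm y) i (by rwa [σ.apply_symm_apply])
    (by rw [σ.apply_symm_apply]; exact Or.inr ⟨hay, hax⟩)
  omega

lemma lemB_pos (hR : IsTypeR a σ) {n y : ℕ} (hy : y ∈ Efin σ n) (hay : 0 < a y)
    (han : 0 < a (σ n)) : y ≤ σ n := by
  by_contra h
  push_neg at h
  obtain ⟨j, hj, rfl⟩ := mem_Efin.1 hy
  have := hR n j h (Or.inl ⟨han, hay⟩)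
  omega

lemma lemB_neg (hR : IsTypeR a σ) {n y : ℕ} (hy : y ∈ Efin σ n) (hay : a y ≤ 0)
    (han : a (σ n) ≤ 0) : y ≤ σ n := by
  by_contra h
  push_neg at h
  obtain ⟨j, hj, rfl⟩ := mem_Efin.1 hy
  have := hR n j h (Or.inr ⟨han, hay⟩)
  omega

lemma T_eq (n : ℕ) : ∑ x ∈ Efin σ n, a x = partialSum (fun k => a (σ k)) (n + 1) := by
  rw [partialSum, Efin, Finset.sum_image (fun x _ y _ h => σ.injective h)]

lemma split_sum (a : ℕ → ℝ) (s : Finset ℕ) :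
    ∑ x ∈ s, a x =
      (∑ x ∈ s, if a x ≤ 0 then a x else 0) + ∑ x ∈ s, if 0 < a x then a x else 0 := by
  rw [← Finset.sum_add_distrib]
  refine Finset.sum_congr rfl fun x _ => ?_
  rcases le_or_gt (a x) 0 with h | h
  · rw [if_pos h, if_neg (not_lt.2 h), add_zero]
  · rw [if_neg (not_le.2 h), if_pos h, zero_add]

lemma sum_le_sum_of_subset_nonpos {s t : Finset ℕ} (f : ℕ → ℝ) (hst : s ⊆ t)
    (hf : ∀ x ∈ t, x ∉ s → f x ≤ 0) : ∑ x ∈ t, f x ≤ ∑ x ∈ s, f x := by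
  have := Finset.sum_le_sum_of_subset_of_nonneg (f := fun x => -f x) hst
    (fun x hx hxs => by simpa using hf x hx hxs)
  simpa using this


-- bridging lemmas between the Idx functions and `Nat.nth`
lemma posStartIdx_eq (a : ℕ → ℝ) (i : ℕ) : posStartIdx a (i + 1) = Nat.nth (pPS a) i := rfl
lemma posEndIdx_eq (a : ℕ → ℝ) (i : ℕ) : posEndIdx a (i + 1) = Nat.nth (pPE a) i := rfl
lemma negStartIdx_eq (a : ℕ → ℝ) (i : ℕ) : negStartIdx a (i + 1) = Nat.nth (pNS a) i := rfl
lemma negEndIdx_eq (a : ℕ → ℝ) (i : ℕ) : negEndIdx a (i + 1) = Nat.nth (pNE a) i := rfl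

section Stage

variable {a : ℕ → ℝ} {σ : Equiv.Perm ℕ}
variable (h0 : a 0 ≤ 0) (hP : {n : ℕ | 0 < a n}.Infinite) (hN : {n : ℕ | a n ≤ 0}.Infinite)
include h0 hP hN

lemma negStage (hR : IsTypeR a σ) {C : ℕ} (hB : HasBBN σ C) (k : ℕ) :
    (∑ x ∈ Finset.range (Nat.nth (pPE a) k + 1), if 0 < a x then a x else 0) +
        (∑ x ∈ Finset.range (Nat.nth (pNE a) (k + C + 1) + 1), if a x ≤ 0 then a x else 0) ≤
        (∑ x ∈ Efin σ (σ.symm (Nat.nth (pNE a) (k + C + 1))), a x) ∧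
    (∑ x ∈ Efin σ (σ.symm (Nat.nth (pNE a) (k + C + 1))), a x) ≤
        (∑ x ∈ Finset.range (Nat.nth (pPE a) k + 1), if 0 < a x then a x else 0) +
        (∑ x ∈ Finset.range (Nat.nth (pNE a) (k + C + 1) + 1), if a x ≤ 0 then a x else 0) +
        SP a (k + 2) (k + 2 * C + 2) ∧
    k + C + 2 ≤ σ.symm (Nat.nth (pNE a) (k + C + 1)) + 1 := by
  have iPE := infPE hP hN
  have iNE := infNE hP hN
  have iPS := infPS hP hN
  have iNS := infNS hP hN
  set n := σ.symm (Nat.nth (pNE a) (k + C + 1)) with hn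
  set A := ∑ x ∈ Finset.range (Nat.nth (pPE a) k + 1), if 0 < a x then a x else 0 with hA
  set ν := ∑ x ∈ Finset.range (Nat.nth (pNE a) (k + C + 1) + 1), if a x ≤ 0 then a x else 0
    with hν
  have hσn : σ n = Nat.nth (pNE a) (k + C + 1) := σ.apply_symm_apply _
  have hE : Nat.nth (pNE a) (k + C + 1) ∈ Efin σ n := hσn ▸ sigma_mem_Efin n
  have haNE : ∀ j, a (Nat.nth (pNE a) j) ≤ 0 := fun j => (Nat.nth_mem_of_infinite iNE j).1
  have haPE : ∀ j, 0 < a (Nat.nth (pPE a) j) := fun j => (Nat.nth_mem_of_infinite iPE j).1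
  have haPS : ∀ j, 0 < a (Nat.nth (pPS a) j) := fun j => (Nat.nth_mem_of_infinite iPS j).1
  have haNS : ∀ j, a (Nat.nth (pNS a) j) ≤ 0 := fun j => (Nat.nth_mem_of_infinite iNS j).1
  have hBn := hasBBN_Efin hB n
  -- C1 : the end of positive block k (0-indexed) is in the stage set
  have hC1 : Nat.nth (pPE a) k ∈ Efin σ n := by
    by_contra hnot
    have hsub : (Finset.Icc (k + 1) (k + C + 1)).image (Nat.nth (pNE a)) ⊆
        (Efin σ n).filter (fun x => x + 1 ∉ Efin σ n) := by
      intro x hx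
      obtain ⟨j, hj, rfl⟩ := Finset.mem_image.1 hx
      rw [Finset.mem_Icc] at hj
      refine Finset.mem_filter.2 ⟨lemA_neg hR hE (haNE _) (haNE j)
        (Nat.nth_monotone iNE hj.2), ?_⟩
      rw [← nthPS_eq h0 hP hN j]
      intro hmem
      apply hnot
      refine lemA_pos hR hmem (haPS j) (haPE k) ?_
      have e1 : Nat.nth (pNS a) (k + 1) = Nat.nth (pPE a) k + 1 := nthNS_succ h0 hP hN k
      have e2 : Nat.nth (pNS a) (k + 1) ≤ Nat.nth (pNS a) j := Nat.nth_monotone iNS hj.1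
      have e3 : Nat.nth (pNS a) j ≤ Nat.nth (pNE a) j := nthNS_le_nthNE h0 hP hN j
      have e4 : Nat.nth (pPS a) j = Nat.nth (pNE a) j + 1 := nthPS_eq h0 hP hN j
      omega
    have hcard : C + 1 ≤ blockCount (Efin σ n) := by
      have h1 : ((Finset.Icc (k + 1) (k + C + 1)).image (Nat.nth (pNE a))).card = C + 1 := by
        rw [Finset.card_image_of_injective _ (Nat.nth_injective iNE), Nat.card_Icc]
        omega
      calc C + 1 = _ := h1.symm
        _ ≤ _ := Finset.card_le_card hsub
    omega
  -- C2 : the start of positive block k+2C+2 (0-indexed) is not in the stage set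
  have hC2 : Nat.nth (pPS a) (k + 2 * C + 2) ∉ Efin σ n := by
    intro hmem
    have hsub : (Finset.Icc (k + C + 1) (k + 2 * C + 1)).image (Nat.nth (pPE a)) ⊆
        (Efin σ n).filter (fun x => x + 1 ∉ Efin σ n) := by
      intro x hx
      obtain ⟨j, hj, rfl⟩ := Finset.mem_image.1 hx
      rw [Finset.mem_Icc] at hj
      have hle : Nat.nth (pPE a) j ≤ Nat.nth (pPS a) (k + 2 * C + 2) := by
        have e1 : Nat.nth (pNS a) (j + 1) = Nat.nth (pPE a) j + 1 := nthNS_succ h0 hP hN j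
        have e2 : Nat.nth (pNS a) (j + 1) ≤ Nat.nth (pNE a) (j + 1) := nthNS_le_nthNE h0 hP hN _
        have e3 : Nat.nth (pPS a) (j + 1) = Nat.nth (pNE a) (j + 1) + 1 := nthPS_eq h0 hP hN _
        have e4 : Nat.nth (pPS a) (j + 1) ≤ Nat.nth (pPS a) (k + 2 * C + 2) :=
          Nat.nth_monotone iPS (by omega)
        omega
      refine Finset.mem_filter.2 ⟨lemA_pos hR hmem (haPS _) (haPE j) hle, ?_⟩
      rw [← nthNS_succ h0 hP hN j]
      intro hmem2
      have hb := lemB_neg hR hmem2 (haNS _) (by rw [hσn]; exact haNE _)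
      rw [hσn] at hb
      have e1 : Nat.nth (pNS a) (j + 1) = Nat.nth (pPE a) j + 1 := nthNS_succ h0 hP hN j
      have e2 : Nat.nth (pPE a) (k + C + 1) ≤ Nat.nth (pPE a) j := Nat.nth_monotone iPE hj.1
      have e3 : Nat.nth (pPS a) (k + C + 1) ≤ Nat.nth (pPE a) (k + C + 1) :=
        nthPS_le_nthPE h0 hP hN _
      have e4 : Nat.nth (pPS a) (k + C + 1) = Nat.nth (pNE a) (k + C + 1) + 1 :=
        nthPS_eq h0 hP hN _
      omega
    have hcard : C + 1 ≤ blockCount (Efin σ n) := by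
      have h1 : ((Finset.Icc (k + C + 1) (k + 2 * C + 1)).image (Nat.nth (pPE a))).card
          = C + 1 := by
        rw [Finset.card_image_of_injective _ (Nat.nth_injective iPE), Nat.card_Icc]
        omega
      calc C + 1 = _ := h1.symm
        _ ≤ _ := Finset.card_le_card hsub
    omega
  -- the nonpositive part is exactly ν
  have hnegsum : (∑ x ∈ Efin σ n, if a x ≤ 0 then a x else 0) = ν := by
    rw [hν, ← Finset.sum_filter, ← Finset.sum_filter]
    congr 1
    ext x
    simp only [Finset.mem_filter, Finset.mem_range, Nat.lt_succ_iff]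
    constructor
    · rintro ⟨hxE, hx0⟩
      have := lemB_neg hR hxE hx0 (by rw [hσn]; exact haNE _)
      rw [hσn] at this
      exact ⟨this, hx0⟩
    · rintro ⟨hxle, hx0⟩
      exact ⟨lemA_neg hR hE (haNE _) hx0 hxle, hx0⟩
  -- lower bound for the positive part
  have hposlow : A ≤ ∑ x ∈ Efin σ n, if 0 < a x then a x else 0 := by
    rw [hA, ← Finset.sum_filter, ← Finset.sum_filter]
    refine Finset.sum_le_sum_of_subset_of_nonneg ?_ ?_
    · intro x hx
      rw [Finset.mem_filter, Finset.mem_range, Nat.lt_succ_iff] at hx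
      exact Finset.mem_filter.2 ⟨lemA_pos hR hC1 (haPE k) hx.2 hx.1, hx.2⟩
    · intro x hx _
      exact le_of_lt (Finset.mem_filter.1 hx).2
  -- upper bound for the positive part
  have hposhigh : (∑ x ∈ Efin σ n, if 0 < a x then a x else 0) ≤
      ∑ x ∈ Finset.range (Nat.nth (pPE a) (k + 2 * C + 1) + 1), if 0 < a x then a x else 0 := by
    rw [← Finset.sum_filter, ← Finset.sum_filter]
    refine Finset.sum_le_sum_of_subset_of_nonneg ?_ ?_
    · intro x hx
      rw [Finset.mem_filter] at hx
      rw [Finset.mem_filter, Finset.mem_range, Nat.lt_succ_iff]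
      refine ⟨?_, hx.2⟩
      by_contra hgt
      push_neg at hgt
      have hreach : Nat.nth (pPS a) (k + 2 * C + 2) ≤ x :=
        pos_block_reach h0 hP hN hx.2 hgt
      exact hC2 (lemA_pos hR hx.1 hx.2 (haPS _) hreach)
    · intro x hx _
      exact le_of_lt (Finset.mem_filter.1 hx).2
  -- computing the range sum of positives
  have hsumYA : (∑ x ∈ Finset.range (Nat.nth (pPE a) (k + 2 * C + 1) + 1),
      if 0 < a x then a x else 0) = A + SP a (k + 2) (k + 2 * C + 2) := by
    have e1 : Nat.nth (pNS a) (k + 1) = Nat.nth (pPE a) k + 1 := nthNS_succ h0 hP hN k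
    have e2 : Nat.nth (pNS a) (k + 1) ≤ Nat.nth (pNE a) (k + 1) := nthNS_le_nthNE h0 hP hN _
    have e3 : Nat.nth (pPS a) (k + 1) = Nat.nth (pNE a) (k + 1) + 1 := nthPS_eq h0 hP hN _
    have e4 : Nat.nth (pPS a) (k + 1) ≤ Nat.nth (pPE a) (k + 1) := nthPS_le_nthPE h0 hP hN _
    have e5 : Nat.nth (pPE a) (k + 1) ≤ Nat.nth (pPE a) (k + 2 * C + 1) :=
      Nat.nth_monotone iPE (by omega)
    have hXY : Nat.nth (pPE a) k + 1 ≤ Nat.nth (pPE a) (k + 2 * C + 1) + 1 := by omega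
    rw [← Finset.sum_range_add_sum_Ico _ hXY]
    congr 1
    have hXZ : Nat.nth (pPE a) k + 1 ≤ Nat.nth (pPS a) (k + 1) := by omega
    have hZY : Nat.nth (pPS a) (k + 1) ≤ Nat.nth (pPE a) (k + 2 * C + 1) + 1 := by omega
    rw [← Finset.sum_Ico_consecutive _ hXZ hZY]
    have hzero : (∑ x ∈ Finset.Ico (Nat.nth (pPE a) k + 1) (Nat.nth (pPS a) (k + 1)),
        if 0 < a x then a x else 0) = 0 := by
      refine Finset.sum_eq_zero fun x hx => ?_
      rw [Finset.mem_Ico] at hx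
      have hneg : a x ≤ 0 := by
        refine sign_neg_block h0 hP hN (k := k + 1) (by omega) (by omega)
      rw [if_neg (not_lt.2 hneg)]
    rw [hzero, zero_add]
    rw [Finset.Ico_add_one_right_eq_Icc]
    rw [SP, if_neg (by omega)]
    have hps : posStartIdx a (k + 2) = Nat.nth (pPS a) (k + 1) := rfl
    have hpe : posEndIdx a (k + 2 * C + 2) = Nat.nth (pPE a) (k + 2 * C + 1) := rfl
    rw [hps, hpe]
  -- cardinality bound
  have hcard2 : k + C + 2 ≤ n + 1 := by
    have hsub2 : (Finset.range (k + C + 2)).image (Nat.nth (pNE a)) ⊆ Efin σ n := by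
      intro x hx
      obtain ⟨j, hj, rfl⟩ := Finset.mem_image.1 hx
      rw [Finset.mem_range] at hj
      exact lemA_neg hR hE (haNE _) (haNE j) (Nat.nth_monotone iNE (by omega))
    have h1 : ((Finset.range (k + C + 2)).image (Nat.nth (pNE a))).card = k + C + 2 := by
      rw [Finset.card_image_of_injective _ (Nat.nth_injective iNE), Finset.card_range]
    have := Finset.card_le_card hsub2
    rw [h1, card_Efin] at this
    exact this
  have hsplit := split_sum a (Efin σ n)
  refine ⟨?_, ?_, hcard2⟩
  · rw [hsplit, hnegsum]
    linarith
  · rw [hsplit, hnegsum]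
    have := hposhigh.trans (le_of_eq hsumYA)
    linarith

lemma posStage (hR : IsTypeR a σ) {C : ℕ} (hB : HasBBN σ C) (k : ℕ) :
    (∑ x ∈ Finset.range (Nat.nth (pPE a) (k + C) + 1), if 0 < a x then a x else 0) +
        (∑ x ∈ Finset.range (Nat.nth (pNE a) k + 1), if a x ≤ 0 then a x else 0) +
        SN a (k + 2) (k + 2 * C + 2) ≤
        (∑ x ∈ Efin σ (σ.symm (Nat.nth (pPE a) (k + C))), a x) ∧
    (∑ x ∈ Efin σ (σ.symm (Nat.nth (pPE a) (k + C))), a x) ≤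
        (∑ x ∈ Finset.range (Nat.nth (pPE a) (k + C) + 1), if 0 < a x then a x else 0) +
        (∑ x ∈ Finset.range (Nat.nth (pNE a) k + 1), if a x ≤ 0 then a x else 0) ∧
    k + C + 1 ≤ σ.symm (Nat.nth (pPE a) (k + C)) + 1 := by
  have iPE := infPE hP hN
  have iNE := infNE hP hN
  have iPS := infPS hP hN
  have iNS := infNS hP hN
  set n := σ.symm (Nat.nth (pPE a) (k + C)) with hn
  set π := ∑ x ∈ Finset.range (Nat.nth (pPE a) (k + C) + 1), if 0 < a x then a x else 0 with hπ
  set ν := ∑ x ∈ Finset.range (Nat.nth (pNE a) k + 1), if a x ≤ 0 then a x else 0 with hν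
  have hσn : σ n = Nat.nth (pPE a) (k + C) := σ.apply_symm_apply _
  have hE : Nat.nth (pPE a) (k + C) ∈ Efin σ n := hσn ▸ sigma_mem_Efin n
  have haNE : ∀ j, a (Nat.nth (pNE a) j) ≤ 0 := fun j => (Nat.nth_mem_of_infinite iNE j).1
  have haPE : ∀ j, 0 < a (Nat.nth (pPE a) j) := fun j => (Nat.nth_mem_of_infinite iPE j).1
  have haPS : ∀ j, 0 < a (Nat.nth (pPS a) j) := fun j => (Nat.nth_mem_of_infinite iPS j).1
  have haNS : ∀ j, a (Nat.nth (pNS a) j) ≤ 0 := fun j => (Nat.nth_mem_of_infinite iNS j).1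
  have hBn := hasBBN_Efin hB n
  -- C1' : the end of negative block k (0-indexed) is in the stage set
  have hC1 : Nat.nth (pNE a) k ∈ Efin σ n := by
    by_contra hnot
    have hsub : (Finset.Icc k (k + C)).image (Nat.nth (pPE a)) ⊆
        (Efin σ n).filter (fun x => x + 1 ∉ Efin σ n) := by
      intro x hx
      obtain ⟨j, hj, rfl⟩ := Finset.mem_image.1 hx
      rw [Finset.mem_Icc] at hj
      refine Finset.mem_filter.2 ⟨lemA_pos hR hE (haPE _) (haPE j)
        (Nat.nth_monotone iPE hj.2), ?_⟩
      rw [← nthNS_succ h0 hP hN j]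
      intro hmem2
      apply hnot
      refine lemA_neg hR hmem2 (haNS _) (haNE k) ?_
      have e1 : Nat.nth (pPS a) k = Nat.nth (pNE a) k + 1 := nthPS_eq h0 hP hN k
      have e2 : Nat.nth (pPS a) k ≤ Nat.nth (pPE a) k := nthPS_le_nthPE h0 hP hN k
      have e3 : Nat.nth (pPE a) k ≤ Nat.nth (pPE a) j := Nat.nth_monotone iPE hj.1
      have e4 : Nat.nth (pNS a) (j + 1) = Nat.nth (pPE a) j + 1 := nthNS_succ h0 hP hN j
      omega
    have hcard : C + 1 ≤ blockCount (Efin σ n) := by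
      have h1 : ((Finset.Icc k (k + C)).image (Nat.nth (pPE a))).card = C + 1 := by
        rw [Finset.card_image_of_injective _ (Nat.nth_injective iPE), Nat.card_Icc]
        omega
      calc C + 1 = _ := h1.symm
        _ ≤ _ := Finset.card_le_card hsub
    omega
  -- C2' : the start of negative block k+2C+2 (0-indexed) is not in the stage set
  have hC2 : Nat.nth (pNS a) (k + 2 * C + 2) ∉ Efin σ n := by
    intro hmem
    have hsub : (Finset.Icc (k + C + 1) (k + 2 * C + 1)).image (Nat.nth (pNE a)) ⊆
        (Efin σ n).filter (fun x => x + 1 ∉ Efin σ n) := by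
      intro x hx
      obtain ⟨j, hj, rfl⟩ := Finset.mem_image.1 hx
      rw [Finset.mem_Icc] at hj
      have hle : Nat.nth (pNE a) j ≤ Nat.nth (pNS a) (k + 2 * C + 2) := by
        have e1 : Nat.nth (pNE a) j ≤ Nat.nth (pNE a) (k + 2 * C + 1) :=
          Nat.nth_monotone iNE hj.2
        have e2 : Nat.nth (pPS a) (k + 2 * C + 1) = Nat.nth (pNE a) (k + 2 * C + 1) + 1 :=
          nthPS_eq h0 hP hN _
        have e3 : Nat.nth (pPS a) (k + 2 * C + 1) ≤ Nat.nth (pPE a) (k + 2 * C + 1) :=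
          nthPS_le_nthPE h0 hP hN _
        have e4 : Nat.nth (pNS a) (k + 2 * C + 2) = Nat.nth (pPE a) (k + 2 * C + 1) + 1 :=
          nthNS_succ h0 hP hN _
        omega
      refine Finset.mem_filter.2 ⟨lemA_neg hR hmem (haNS _) (haNE j) hle, ?_⟩
      rw [← nthPS_eq h0 hP hN j]
      intro hmem2
      have hb := lemB_pos hR hmem2 (haPS _) (by rw [hσn]; exact haPE _)
      rw [hσn] at hb
      have e1 : Nat.nth (pPS a) (k + C + 1) ≤ Nat.nth (pPS a) j := Nat.nth_monotone iPS hj.1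
      have e2 : Nat.nth (pPS a) (k + C + 1) = Nat.nth (pNE a) (k + C + 1) + 1 :=
        nthPS_eq h0 hP hN _
      have e3 : Nat.nth (pNS a) (k + C + 1) ≤ Nat.nth (pNE a) (k + C + 1) :=
        nthNS_le_nthNE h0 hP hN _
      have e4 : Nat.nth (pNS a) (k + C + 1) = Nat.nth (pPE a) (k + C) + 1 :=
        nthNS_succ h0 hP hN _
      omega
    have hcard : C + 1 ≤ blockCount (Efin σ n) := by
      have h1 : ((Finset.Icc (k + C + 1) (k + 2 * C + 1)).image (Nat.nth (pNE a))).card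
          = C + 1 := by
        rw [Finset.card_image_of_injective _ (Nat.nth_injective iNE), Nat.card_Icc]
        omega
      calc C + 1 = _ := h1.symm
        _ ≤ _ := Finset.card_le_card hsub
    omega
  -- the positive part is exactly π
  have hpossum : (∑ x ∈ Efin σ n, if 0 < a x then a x else 0) = π := by
    rw [hπ, ← Finset.sum_filter, ← Finset.sum_filter]
    congr 1
    ext x
    simp only [Finset.mem_filter, Finset.mem_range, Nat.lt_succ_iff]
    constructor
    · rintro ⟨hxE, hx0⟩
      have := lemB_pos hR hxE hx0 (by rw [hσn]; exact haPE _)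
      rw [hσn] at this
      exact ⟨this, hx0⟩
    · rintro ⟨hxle, hx0⟩
      exact ⟨lemA_pos hR hE (haPE _) hx0 hxle, hx0⟩
  -- upper bound for the nonpositive part
  have hneghigh : (∑ x ∈ Efin σ n, if a x ≤ 0 then a x else 0) ≤ ν := by
    rw [hν, ← Finset.sum_filter, ← Finset.sum_filter]
    refine sum_le_sum_of_subset_nonpos _ ?_ ?_
    · intro x hx
      rw [Finset.mem_filter, Finset.mem_range, Nat.lt_succ_iff] at hx
      exact Finset.mem_filter.2 ⟨lemA_neg hR hC1 (haNE k) hx.2 hx.1, hx.2⟩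
    · intro x hx _
      exact (Finset.mem_filter.1 hx).2
  -- lower bound for the nonpositive part
  have hneglow : (∑ x ∈ Finset.range (Nat.nth (pNE a) (k + 2 * C + 1) + 1),
      if a x ≤ 0 then a x else 0) ≤ ∑ x ∈ Efin σ n, if a x ≤ 0 then a x else 0 := by
    rw [← Finset.sum_filter, ← Finset.sum_filter]
    refine sum_le_sum_of_subset_nonpos _ ?_ ?_
    · intro x hx
      rw [Finset.mem_filter] at hx
      rw [Finset.mem_filter, Finset.mem_range, Nat.lt_succ_iff]
      refine ⟨?_, hx.2⟩
      by_contra hgt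
      push_neg at hgt
      have hreach : Nat.nth (pNS a) (k + 2 * C + 2) ≤ x :=
        neg_block_reach h0 hP hN hx.2 hgt
      exact hC2 (lemA_neg hR hx.1 hx.2 (haNS _) hreach)
    · intro x hx _
      exact (Finset.mem_filter.1 hx).2
  -- computing the range sum of nonpositives
  have hsumYν : (∑ x ∈ Finset.range (Nat.nth (pNE a) (k + 2 * C + 1) + 1),
      if a x ≤ 0 then a x else 0) = ν + SN a (k + 2) (k + 2 * C + 2) := by
    have e1 : Nat.nth (pPS a) k = Nat.nth (pNE a) k + 1 := nthPS_eq h0 hP hN k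
    have e2 : Nat.nth (pPS a) k ≤ Nat.nth (pPE a) k := nthPS_le_nthPE h0 hP hN k
    have e3 : Nat.nth (pNS a) (k + 1) = Nat.nth (pPE a) k + 1 := nthNS_succ h0 hP hN k
    have e4 : Nat.nth (pNS a) (k + 1) ≤ Nat.nth (pNE a) (k + 1) := nthNS_le_nthNE h0 hP hN _
    have e5 : Nat.nth (pNE a) (k + 1) ≤ Nat.nth (pNE a) (k + 2 * C + 1) :=
      Nat.nth_monotone iNE (by omega)
    have hXY : Nat.nth (pNE a) k + 1 ≤ Nat.nth (pNE a) (k + 2 * C + 1) + 1 := by omega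
    rw [← Finset.sum_range_add_sum_Ico _ hXY]
    congr 1
    have hXZ : Nat.nth (pNE a) k + 1 ≤ Nat.nth (pNS a) (k + 1) := by omega
    have hZY : Nat.nth (pNS a) (k + 1) ≤ Nat.nth (pNE a) (k + 2 * C + 1) + 1 := by omega
    rw [← Finset.sum_Ico_consecutive _ hXZ hZY]
    have hzero : (∑ x ∈ Finset.Ico (Nat.nth (pNE a) k + 1) (Nat.nth (pNS a) (k + 1)),
        if a x ≤ 0 then a x else 0) = 0 := by
      refine Finset.sum_eq_zero fun x hx => ?_
      rw [Finset.mem_Ico] at hx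
      have hpos : 0 < a x := by
        refine sign_pos_block h0 hP hN (k := k) (by omega) (by omega)
      rw [if_neg (not_le.2 hpos)]
    rw [hzero, zero_add]
    rw [Finset.Ico_add_one_right_eq_Icc]
    rw [SN, if_neg (by omega)]
    have hns : negStartIdx a (k + 2) = Nat.nth (pNS a) (k + 1) := rfl
    have hne : negEndIdx a (k + 2 * C + 2) = Nat.nth (pNE a) (k + 2 * C + 1) := rfl
    rw [hns, hne]
  -- cardinality bound
  have hcard2 : k + C + 1 ≤ n + 1 := by
    have hsub2 : (Finset.range (k + C + 1)).image (Nat.nth (pPE a)) ⊆ Efin σ n := by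
      intro x hx
      obtain ⟨j, hj, rfl⟩ := Finset.mem_image.1 hx
      rw [Finset.mem_range] at hj
      exact lemA_pos hR hE (haPE _) (haPE j) (Nat.nth_monotone iPE (by omega))
    have h1 : ((Finset.range (k + C + 1)).image (Nat.nth (pPE a))).card = k + C + 1 := by
      rw [Finset.card_image_of_injective _ (Nat.nth_injective iPE), Finset.card_range]
    have := Finset.card_le_card hsub2
    rw [h1, card_Efin] at this
    exact this
  have hsplit := split_sum a (Efin σ n)
  refine ⟨?_, ?_, hcard2⟩
  · rw [hsplit, hpossum]
    have := hsumYν ▸ hneglow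
    linarith
  · rw [hsplit, hpossum]
    linarith


end Stage


/-- If a conditionally divergent series (with `a 0 ≤ 0`, infinitely
many positive and nonpositive terms) can be fixed by some type R λ-permutation
but violates `ST_P` or violates `ST_N`, then `Z_R` is a singleton. -/
theorem statement2 (a : ℕ → ℝ) (h0 : a 0 ≤ 0)
    (hP : {n : ℕ | 0 < a n}.Infinite) (hN : {n : ℕ | a n ≤ 0}.Infinite)
    (hcd : CondDivergent a) (hne : (ZR a).Nonempty)
    (hviol : ¬ STP a ∨ ¬ STN a) :
    ∃ r : ℝ, ZR a = {r} := by
  obtain ⟨r₀, hr₀⟩ := hne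
  have huniq : ∀ r s : ℝ, r ∈ ZR a → s ∈ ZR a → r = s := by
    intro r s hr hs
    obtain ⟨σ, ⟨hσR, ⟨C₁, hσB⟩, -⟩, hσconv⟩ := hr
    obtain ⟨τ, ⟨hτR, ⟨C₂, hτB⟩, -⟩, hτconv⟩ := hs
    set C := max C₁ C₂ with hC
    have hσB' : HasBBN σ C := fun n => (hσB n).trans (le_max_left _ _)
    have hτB' : HasBBN τ C := fun n => (hτB n).trans (le_max_right _ _)
    have hσconv' : Filter.Tendsto (partialSum (fun m => a (σ m))) Filter.atTop (nhds r) :=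
      hσconv
    have hτconv' : Filter.Tendsto (partialSum (fun m => a (τ m))) Filter.atTop (nhds s) :=
      hτconv
    have key : ∀ ε : ℝ, 0 < ε → |r - s| < 3 * ε := by
      intro ε hε
      obtain ⟨N₁, hN₁⟩ := Metric.tendsto_atTop.1 hσconv' ε hε
      obtain ⟨N₂, hN₂⟩ := Metric.tendsto_atTop.1 hτconv' ε hε
      rcases hviol with hv | hv
      · -- ST_P fails
        rw [STP] at hv
        push_neg at hv
        obtain ⟨i, hi, hSP⟩ := hv (2 * C) ε hε (N₁ + N₂ + C + 2)
        set k := i - 2 with hk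
        have hik : i = k + 2 := by omega
        have hSP' : SP a (k + 2) (k + 2 * C + 2) < ε := by
          have e1 : k + 2 = i := by omega
          have e2 : k + 2 * C + 2 = i + 2 * C := by omega
          rw [e1, e2]
          exact hSP
        obtain ⟨h1l, h1u, h1n⟩ := negStage h0 hP hN hσR hσB' k
        obtain ⟨h2l, h2u, h2n⟩ := negStage h0 hP hN hτR hτB' k
        rw [T_eq] at h1l h1u
        rw [T_eq] at h2l h2u
        have hd1 := hN₁ (σ.symm (Nat.nth (pNE a) (k + C + 1)) + 1) (by omega)
        have hd2 := hN₂ (τ.symm (Nat.nth (pNE a) (k + C + 1)) + 1) (by omega)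
        rw [Real.dist_eq] at hd1 hd2
        rw [abs_lt] at hd1 hd2 ⊢
        constructor <;> [linarith; linarith]
      · -- ST_N fails
        rw [STN] at hv
        push_neg at hv
        obtain ⟨i, hi, hSN⟩ := hv (2 * C) ε hε (N₁ + N₂ + C + 2)
        set k := i - 2 with hk
        have hik : i = k + 2 := by omega
        have hSN' : -ε < SN a (k + 2) (k + 2 * C + 2) := by
          have e1 : k + 2 = i := by omega
          have e2 : k + 2 * C + 2 = i + 2 * C := by omega
          rw [e1, e2]
          exact hSN
        obtain ⟨h1l, h1u, h1n⟩ := posStage h0 hP hN hσR hσB' k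
        obtain ⟨h2l, h2u, h2n⟩ := posStage h0 hP hN hτR hτB' k
        rw [T_eq] at h1l h1u
        rw [T_eq] at h2l h2u
        have hd1 := hN₁ (σ.symm (Nat.nth (pPE a) (k + C)) + 1) (by omega)
        have hd2 := hN₂ (τ.symm (Nat.nth (pPE a) (k + C)) + 1) (by omega)
        rw [Real.dist_eq] at hd1 hd2
        rw [abs_lt] at hd1 hd2 ⊢
        constructor <;> [linarith; linarith]
    by_contra hne'
    have h3 : 0 < |r - s| := abs_pos.2 (sub_ne_zero.2 hne')
    have h4 := key (|r - s| / 4) (by linarith)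
    linarith
  refine ⟨r₀, ?_⟩
  ext x
  simp only [Set.mem_singleton_iff]
  exact ⟨fun hx => huniq x r₀ hx hr₀, fun hx => hx ▸ hr₀⟩
end
end

section
/- Let ∑_{n=0}^∞ a_n be a series of real numbers with a_0 ≤ 0, such that a_n > 0 for infinitely many n and a_n ≤ 0 for infinitely many n. Let σ be a type R permutation of the series with bounded block number C ≥ 1. For each i ≥ 1 let m_i denote the largest element of the i-th negative block N_i, and let t_i = σ^{-1}(m_i). Then for every i ≥ 1: S_{[N_1,N_i]} + S_{[P_1,P_{i−C}]} ≤ Σ_{n=0}^{t_i} a_{σ(n)} ≤ S_{[N_1,N_i]} + S_{[P_1,P_{i+C−1}]}, where S_{[P_1,P_{i−C}]} is interpreted as 0 when i ≤ C. -/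
open Filter Finset

noncomputable section
open scoped Classical

/-- The predicate "`n` is the last element of a negative block". -/
def Epred (a : ℕ → ℝ) : ℕ → Prop := fun n => a n ≤ 0 ∧ 0 < a (n + 1)

/-- The predicate "`n` is the last element of a positive block". -/
def Fpred (a : ℕ → ℝ) : ℕ → Prop := fun n => 0 < a n ∧ a (n + 1) ≤ 0

section Aux

variable {a : ℕ → ℝ}

/-- Between a nonpositive index and a later positive index there is a negative-block end. -/
lemma exists_trans_neg (a : ℕ → ℝ) {lo hi : ℕ} (hlh : lo ≤ hi) (hlo : a lo ≤ 0)
    (hhi : 0 < a hi) : ∃ e, lo ≤ e ∧ e < hi ∧ a e ≤ 0 ∧ 0 < a (e + 1) := by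
  classical
  set P : ℕ → Prop := fun m => a m ≤ 0 ∧ lo ≤ m with hPdef
  have hPlo : P lo := ⟨hlo, le_rfl⟩
  have h1 : lo ≤ Nat.findGreatest P hi := Nat.le_findGreatest hlh hPlo
  have h2 : P (Nat.findGreatest P hi) := Nat.findGreatest_spec hlh hPlo
  have h3 : Nat.findGreatest P hi ≤ hi := Nat.findGreatest_le hi
  have h4 : Nat.findGreatest P hi < hi := by
    rcases lt_or_eq_of_le h3 with h | h
    · exact h
    · exfalso; rw [h] at h2; exact absurd h2.1 (not_le.mpr hhi)
  refine ⟨Nat.findGreatest P hi, h1, h4, h2.1, ?_⟩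
  by_contra h
  have h5 : ¬ P (Nat.findGreatest P hi + 1) :=
    Nat.findGreatest_is_greatest (Nat.lt_succ_self _) (by omega)
  exact h5 ⟨not_lt.mp h, by omega⟩

/-- Between a positive index and a later nonpositive index there is a positive-block end. -/
lemma exists_trans_pos (a : ℕ → ℝ) {lo hi : ℕ} (hlh : lo ≤ hi) (hlo : 0 < a lo)
    (hhi : a hi ≤ 0) : ∃ e, lo ≤ e ∧ e < hi ∧ 0 < a e ∧ a (e + 1) ≤ 0 := by
  classical
  set P : ℕ → Prop := fun m => 0 < a m ∧ lo ≤ m with hPdef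
  have hPlo : P lo := ⟨hlo, le_rfl⟩
  have h1 : lo ≤ Nat.findGreatest P hi := Nat.le_findGreatest hlh hPlo
  have h2 : P (Nat.findGreatest P hi) := Nat.findGreatest_spec hlh hPlo
  have h3 : Nat.findGreatest P hi ≤ hi := Nat.findGreatest_le hi
  have h4 : Nat.findGreatest P hi < hi := by
    rcases lt_or_eq_of_le h3 with h | h
    · exact h
    · exfalso; rw [h] at h2; exact absurd h2.1 (not_lt.mpr hhi)
  refine ⟨Nat.findGreatest P hi, h1, h4, h2.1, ?_⟩
  by_contra h
  have h5 : ¬ P (Nat.findGreatest P hi + 1) :=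
    Nat.findGreatest_is_greatest (Nat.lt_succ_self _) (by omega)
  exact h5 ⟨not_le.mp h, by omega⟩

lemma Einf (hP : {n : ℕ | 0 < a n}.Infinite) (hN : {n : ℕ | a n ≤ 0}.Infinite) :
    {n : ℕ | Epred a n}.Infinite := by
  apply Set.infinite_of_forall_exists_gt
  intro b
  obtain ⟨n, hn, hbn⟩ := hN.exists_gt b
  obtain ⟨p, hp, hnp⟩ := hP.exists_gt n
  obtain ⟨e, he1, _, he3, he4⟩ := exists_trans_neg a hnp.le hn hp
  exact ⟨e, ⟨he3, he4⟩, lt_of_lt_of_le hbn he1⟩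

lemma Finf (hP : {n : ℕ | 0 < a n}.Infinite) (hN : {n : ℕ | a n ≤ 0}.Infinite) :
    {n : ℕ | Fpred a n}.Infinite := by
  apply Set.infinite_of_forall_exists_gt
  intro b
  obtain ⟨p, hp, hbp⟩ := hP.exists_gt b
  obtain ⟨n, hn, hpn⟩ := hN.exists_gt p
  obtain ⟨e, he1, _, he3, he4⟩ := exists_trans_pos a hpn.le hp hn
  exact ⟨e, ⟨he3, he4⟩, lt_of_lt_of_le hbp he1⟩

lemma count_E_nth_F (h0 : a 0 ≤ 0)
    (hE : {n : ℕ | Epred a n}.Infinite) (hF : {n : ℕ | Fpred a n}.Infinite) (k : ℕ) :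
    k + 1 ≤ Nat.count (Epred a) (Nat.nth (Fpred a) k) := by
  induction k with
  | zero =>
    have hf0 : Fpred a (Nat.nth (Fpred a) 0) := Nat.nth_mem_of_infinite hF 0
    obtain ⟨e, _, he2, he3, he4⟩ := exists_trans_neg a (Nat.zero_le _) h0 hf0.1
    have hEe : Epred a e := ⟨he3, he4⟩
    have c1 : Nat.count (Epred a) (e + 1) = Nat.count (Epred a) e + 1 := by
      rw [Nat.count_succ, if_pos hEe]
    have c2 : Nat.count (Epred a) (e + 1) ≤ Nat.count (Epred a) (Nat.nth (Fpred a) 0) :=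
      Nat.count_monotone _ he2
    omega
  | succ k ih =>
    have hfk : Fpred a (Nat.nth (Fpred a) k) := Nat.nth_mem_of_infinite hF k
    have hfk1 : Fpred a (Nat.nth (Fpred a) (k + 1)) := Nat.nth_mem_of_infinite hF (k + 1)
    have hlt : Nat.nth (Fpred a) k < Nat.nth (Fpred a) (k + 1) :=
      (Nat.nth_lt_nth hF).mpr (Nat.lt_succ_self k)
    obtain ⟨e, he1, he2, he3, he4⟩ := exists_trans_neg a (by omega) hfk.2 hfk1.1
    have hEe : Epred a e := ⟨he3, he4⟩
    have c1 : Nat.count (Epred a) (e + 1) = Nat.count (Epred a) e + 1 := by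
      rw [Nat.count_succ, if_pos hEe]
    have c2 : Nat.count (Epred a) (e + 1) ≤ Nat.count (Epred a) (Nat.nth (Fpred a) (k + 1)) :=
      Nat.count_monotone _ he2
    have c3 : Nat.count (Epred a) (Nat.nth (Fpred a) k) ≤ Nat.count (Epred a) e :=
      Nat.count_monotone _ (by omega)
    omega

lemma count_F_nth_E
    (hE : {n : ℕ | Epred a n}.Infinite) (hF : {n : ℕ | Fpred a n}.Infinite) (k : ℕ) :
    k + 1 ≤ Nat.count (Fpred a) (Nat.nth (Epred a) (k + 1)) := by
  induction k with
  | zero =>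
    show 0 + 1 ≤ Nat.count (Fpred a) (Nat.nth (Epred a) 1)
    have he0 : Epred a (Nat.nth (Epred a) 0) := Nat.nth_mem_of_infinite hE 0
    have he1 : Epred a (Nat.nth (Epred a) 1) := Nat.nth_mem_of_infinite hE 1
    have hlt : Nat.nth (Epred a) 0 < Nat.nth (Epred a) 1 := (Nat.nth_lt_nth hE).mpr Nat.zero_lt_one
    obtain ⟨f, hf1, hf2, hf3, hf4⟩ := exists_trans_pos a (by omega) he0.2 he1.1
    have hFf : Fpred a f := ⟨hf3, hf4⟩
    have c1 : Nat.count (Fpred a) (f + 1) = Nat.count (Fpred a) f + 1 := by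
      rw [Nat.count_succ, if_pos hFf]
    have c2 : Nat.count (Fpred a) (f + 1) ≤ Nat.count (Fpred a) (Nat.nth (Epred a) 1) :=
      Nat.count_monotone _ hf2
    omega
  | succ k ih =>
    show k + 1 + 1 ≤ Nat.count (Fpred a) (Nat.nth (Epred a) (k + 2))
    have hek1 : Epred a (Nat.nth (Epred a) (k + 1)) := Nat.nth_mem_of_infinite hE (k + 1)
    have hek2 : Epred a (Nat.nth (Epred a) (k + 2)) := Nat.nth_mem_of_infinite hE (k + 2)
    have hlt : Nat.nth (Epred a) (k + 1) < Nat.nth (Epred a) (k + 2) :=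
      (Nat.nth_lt_nth hE).mpr (by omega)
    obtain ⟨f, hf1, hf2, hf3, hf4⟩ := exists_trans_pos a (by omega) hek1.2 hek2.1
    have hFf : Fpred a f := ⟨hf3, hf4⟩
    have c1 : Nat.count (Fpred a) (f + 1) = Nat.count (Fpred a) f + 1 := by
      rw [Nat.count_succ, if_pos hFf]
    have c2 : Nat.count (Fpred a) (f + 1) ≤ Nat.count (Fpred a) (Nat.nth (Epred a) (k + 2)) :=
      Nat.count_monotone _ hf2
    have c3 : Nat.count (Fpred a) (Nat.nth (Epred a) (k + 1)) ≤ Nat.count (Fpred a) f :=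
      Nat.count_monotone _ (by omega)
    omega

lemma E_lt_F (h0 : a 0 ≤ 0)
    (hE : {n : ℕ | Epred a n}.Infinite) (hF : {n : ℕ | Fpred a n}.Infinite) (k : ℕ) :
    Nat.nth (Epred a) k < Nat.nth (Fpred a) k :=
  Nat.nth_lt_of_lt_count (count_E_nth_F h0 hE hF k)

lemma F_lt_E
    (hE : {n : ℕ | Epred a n}.Infinite) (hF : {n : ℕ | Fpred a n}.Infinite) (k : ℕ) :
    Nat.nth (Fpred a) k < Nat.nth (Epred a) (k + 1) :=
  Nat.nth_lt_of_lt_count (count_F_nth_E hE hF k)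

lemma SN_one (a : ℕ → ℝ) (h0 : a 0 ≤ 0) (i : ℕ) (hi : 1 ≤ i) :
    SN a 1 i = ∑ n ∈ Finset.range (negEndIdx a i + 1), if a n ≤ 0 then a n else 0 := by
  have hstart : negStartIdx a 1 = 0 := by
    have h1 : negStartIdx a 1 = sInf {n : ℕ | a n ≤ 0 ∧ (n = 0 ∨ 0 < a (n - 1))} := by
      unfold negStartIdx
      norm_num [Nat.nth_zero]
    rw [h1]
    exact Nat.sInf_eq_zero.mpr (Or.inl ⟨h0, Or.inl rfl⟩)
  unfold SN
  rw [if_neg (by omega), hstart]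
  apply Finset.sum_congr _ (fun _ _ => rfl)
  ext x
  simp [Finset.mem_Icc, Finset.mem_range, Nat.lt_succ_iff]

lemma SP_one (a : ℕ → ℝ) (h0 : a 0 ≤ 0)
    (hF : {n : ℕ | Fpred a n}.Infinite) (j : ℕ) (hj : 1 ≤ j) :
    SP a 1 j = ∑ n ∈ Finset.range (posEndIdx a j + 1), if 0 < a n then a n else 0 := by
  have hq : 0 < a (posEndIdx a j) := (Nat.nth_mem_of_infinite hF (j - 1)).1
  have hne : {n : ℕ | 0 < a n}.Nonempty := ⟨posEndIdx a j, hq⟩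
  set n0 := sInf {n : ℕ | 0 < a n} with hn0def
  have hn0 : 0 < a n0 := Nat.sInf_mem hne
  have hn0min : ∀ m < n0, ¬ 0 < a m := fun m hm => Nat.notMem_of_lt_sInf hm
  have hmem : n0 ∈ {n : ℕ | 0 < a n ∧ (n = 0 ∨ a (n - 1) ≤ 0)} := by
    refine ⟨hn0, ?_⟩
    rcases Nat.eq_zero_or_pos n0 with h | h
    · exact Or.inl h
    · exact Or.inr (le_of_not_gt (hn0min _ (by omega)))
  have hstart : posStartIdx a 1 = n0 := by
    have h1 : posStartIdx a 1 = sInf {n : ℕ | 0 < a n ∧ (n = 0 ∨ a (n - 1) ≤ 0)} := by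
      unfold posStartIdx
      norm_num [Nat.nth_zero]
    rw [h1]
    apply le_antisymm
    · exact Nat.sInf_le hmem
    · have h2 : sInf {n : ℕ | 0 < a n ∧ (n = 0 ∨ a (n - 1) ≤ 0)}
          ∈ {n : ℕ | 0 < a n ∧ (n = 0 ∨ a (n - 1) ≤ 0)} := Nat.sInf_mem ⟨n0, hmem⟩
      exact Nat.sInf_le h2.1
  have hq0 : n0 ≤ posEndIdx a j := Nat.sInf_le hq
  unfold SP
  rw [if_neg (by omega), hstart]
  apply Finset.sum_subset
  · intro x hx
    simp only [Finset.mem_Icc] at hx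
    simp only [Finset.mem_range]
    omega
  · intro x hx hx'
    simp only [Finset.mem_range] at hx
    simp only [Finset.mem_Icc] at hx'
    have : x < n0 := by omega
    rw [if_neg (hn0min x this)]

end Aux

/-- For a type R permutation `σ` with bounded block number `C ≥ 1`
of a series with `a 0 ≤ 0` having infinitely many positive and nonpositive
terms, for every `i ≥ 1`, writing `m_i` for the largest element of `N_i` and
`t_i = σ⁻¹ m_i`, we have
`S_{[N_1,N_i]} + S_{[P_1,P_{i−C}]} ≤ Σ_{n=0}^{t_i} a (σ n) ≤ S_{[N_1,N_i]} + S_{[P_1,P_{i+C−1}]}`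
(with `S_{[P_1,P_{i−C}]} = 0` when `i ≤ C`, via truncated subtraction). -/
theorem statement3 (a : ℕ → ℝ) (h0 : a 0 ≤ 0)
    (hP : {n : ℕ | 0 < a n}.Infinite) (hN : {n : ℕ | a n ≤ 0}.Infinite)
    (σ : Equiv.Perm ℕ) (C : ℕ) (hC : 1 ≤ C)
    (hR : IsTypeR a σ) (hB : HasBBN σ C) :
    ∀ i : ℕ, 1 ≤ i →
      SN a 1 i + SP a 1 (i - C)
          ≤ ∑ n ∈ Finset.range (σ.symm (negEndIdx a i) + 1), a (σ n) ∧
      ∑ n ∈ Finset.range (σ.symm (negEndIdx a i) + 1), a (σ n)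
          ≤ SN a 1 i + SP a 1 (i + C - 1) := by
  intro i hi
  have hEinf : {n : ℕ | Epred a n}.Infinite := Einf hP hN
  have hFinf : {n : ℕ | Fpred a n}.Infinite := Finf hP hN
  set m := negEndIdx a i with hm
  have hm_def : m = Nat.nth (Epred a) (i - 1) := hm
  set t := σ.symm m with ht
  set T := (Finset.range (t + 1)).image σ with hT
  have hmE : Epred a m := by rw [hm_def]; exact Nat.nth_mem_of_infinite hEinf _
  have memT : ∀ x : ℕ, x ∈ T ↔ σ.symm x ≤ t := by
    intro x
    rw [hT, Finset.mem_image]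
    constructor
    · rintro ⟨n, hn, rfl⟩
      rw [Finset.mem_range, Nat.lt_succ_iff] at hn
      simpa using hn
    · intro h
      exact ⟨σ.symm x, by rw [Finset.mem_range, Nat.lt_succ_iff]; exact h, by simp⟩
  have factN : ∀ x, a x ≤ 0 → x ≤ m → x ∈ T := by
    intro x hx hxm
    rw [memT, ht]
    rcases eq_or_lt_of_le hxm with rfl | hlt
    · exact le_rfl
    · exact (hR (σ.symm x) (σ.symm m) (by simpa using hlt)
        (Or.inr ⟨by simpa using hx, by simpa using hmE.1⟩)).le
  have factN' : ∀ x ∈ T, a x ≤ 0 → x ≤ m := by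
    intro x hxT hx
    by_contra hgt
    push_neg at hgt
    have h2 : σ.symm x ≤ t := (memT x).mp hxT
    have h1 : σ.symm m < σ.symm x := hR (σ.symm m) (σ.symm x) (by simpa using hgt)
      (Or.inr ⟨by simpa using hmE.1, by simpa using hx⟩)
    rw [← ht] at h1
    omega
  have factP : ∀ x ∈ T, 0 < a x → ∀ y, 0 < a y → y < x → y ∈ T := by
    intro x hxT hx y hy hyx
    rw [memT]
    have h1 : σ.symm y < σ.symm x := hR (σ.symm y) (σ.symm x) (by simpa using hyx)
      (Or.inl ⟨by simpa using hy, by simpa using hx⟩)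
    have h2 : σ.symm x ≤ t := (memT x).mp hxT
    omega
  have hTne : T.Nonempty := ⟨m, factN m hmE.1 le_rfl⟩
  have hbc : (T.filter (fun z => z + 1 ∉ T)).card ≤ C := hB t
  -- upper bound on positive elements of T
  have hupper : ∀ x ∈ T, 0 < a x → x ≤ Nat.nth (Fpred a) (i + C - 2) := by
    by_contra hcon
    push_neg at hcon
    obtain ⟨x, hxT, hxpos, hxgt⟩ := hcon
    have hmax : x ≤ T.max' hTne := Finset.le_max' T x hxT
    have hgr : ∀ r, r < C → Nat.nth (Fpred a) (i - 1 + r) ≤ Nat.nth (Fpred a) (i + C - 2) := by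
      intro r hr
      exact (Nat.nth_le_nth hFinf).mpr (by omega)
    have hsub : insert (T.max' hTne) ((Finset.range C).image (fun r => Nat.nth (Fpred a) (i - 1 + r)))
        ⊆ T.filter (fun z => z + 1 ∉ T) := by
      intro z hz
      rw [Finset.mem_insert] at hz
      rcases hz with rfl | hz
      · refine Finset.mem_filter.mpr ⟨T.max'_mem hTne, fun hmem => ?_⟩
        have := Finset.le_max' T _ hmem
        omega
      · obtain ⟨r, hr, rfl⟩ := Finset.mem_image.mp hz
        rw [Finset.mem_range] at hr
        have hqF : Fpred a (Nat.nth (Fpred a) (i - 1 + r)) := Nat.nth_mem_of_infinite hFinf _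
        have hqx : Nat.nth (Fpred a) (i - 1 + r) < x := lt_of_le_of_lt (hgr r hr) hxgt
        have hqT : Nat.nth (Fpred a) (i - 1 + r) ∈ T := factP x hxT hxpos _ hqF.1 hqx
        refine Finset.mem_filter.mpr ⟨hqT, fun hmem => ?_⟩
        have h1 : Nat.nth (Fpred a) (i - 1 + r) + 1 ≤ m := factN' _ hmem hqF.2
        have h2 : Nat.nth (Epred a) (i - 1) < Nat.nth (Fpred a) (i - 1) := E_lt_F h0 hEinf hFinf (i - 1)
        have h3 : Nat.nth (Fpred a) (i - 1) ≤ Nat.nth (Fpred a) (i - 1 + r) :=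
          (Nat.nth_le_nth hFinf).mpr (by omega)
        rw [hm_def] at h1
        omega
    have hni : T.max' hTne ∉ (Finset.range C).image (fun r => Nat.nth (Fpred a) (i - 1 + r)) := by
      intro hmem
      obtain ⟨r, hr, heq⟩ := Finset.mem_image.mp hmem
      rw [Finset.mem_range] at hr
      have := hgr r hr
      omega
    have hcard : (insert (T.max' hTne) ((Finset.range C).image (fun r => Nat.nth (Fpred a) (i - 1 + r)))).card = C + 1 := by
      rw [Finset.card_insert_of_notMem hni, Finset.card_image_of_injOn, Finset.card_range]
      intro r hr r' hr' hrr'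
      have := Nat.nth_injective hFinf hrr'
      omega
    have := Finset.card_le_card hsub
    omega
  -- lower bound : all positives up to nth F (i - C - 1) are in T (when C < i)
  have hlower : C < i → ∀ x, x ≤ Nat.nth (Fpred a) (i - C - 1) → 0 < a x → x ∈ T := by
    intro hCi
    by_contra hcon
    push_neg at hcon
    obtain ⟨x, hxle, hxpos, hxT⟩ := hcon
    have hYne : {y : ℕ | 0 < a y ∧ y ∉ T}.Nonempty := ⟨x, hxpos, hxT⟩
    set y0 := sInf {y : ℕ | 0 < a y ∧ y ∉ T} with hy0
    have hy0mem : 0 < a y0 ∧ y0 ∉ T := Nat.sInf_mem hYne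
    have hy0le : y0 ≤ x := Nat.sInf_le ⟨hxpos, hxT⟩
    have hy0pos : 1 ≤ y0 := by
      rcases Nat.eq_zero_or_pos y0 with h | h
      · exfalso; rw [h] at hy0mem; exact absurd hy0mem.1 (not_lt.mpr h0)
      · exact h
    have hkey : Nat.nth (Fpred a) (i - C - 1) < Nat.nth (Epred a) (i - C) := by
      have h1 := F_lt_E hEinf hFinf (i - C - 1)
      have h2 : i - C - 1 + 1 = i - C := by omega
      rwa [h2] at h1
    have hgE : ∀ r, r < C → Nat.nth (Epred a) (i - C) ≤ Nat.nth (Epred a) (i - C + r) :=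
      fun r _ => (Nat.nth_le_nth hEinf).mpr (by omega)
    have hsub : insert (y0 - 1) ((Finset.range C).image (fun r => Nat.nth (Epred a) (i - C + r)))
        ⊆ T.filter (fun z => z + 1 ∉ T) := by
      intro z hz
      rw [Finset.mem_insert] at hz
      rcases hz with rfl | hz
      · have hzT : y0 - 1 ∈ T := by
          rcases le_or_gt (a (y0 - 1)) 0 with hc | hc
          · apply factN _ hc
            have h6 : Nat.nth (Epred a) (i - C) ≤ Nat.nth (Epred a) (i - 1) :=
              (Nat.nth_le_nth hEinf).mpr (by omega)
            rw [hm_def]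
            omega
          · by_contra hmem
            have h7 : y0 ≤ y0 - 1 := Nat.sInf_le ⟨hc, hmem⟩
            omega
        refine Finset.mem_filter.mpr ⟨hzT, ?_⟩
        have h8 : y0 - 1 + 1 = y0 := by omega
        rw [h8]
        exact hy0mem.2
      · obtain ⟨r, hr, rfl⟩ := Finset.mem_image.mp hz
        rw [Finset.mem_range] at hr
        have heE : Epred a (Nat.nth (Epred a) (i - C + r)) := Nat.nth_mem_of_infinite hEinf _
        have heM : Nat.nth (Epred a) (i - C + r) ≤ m := by
          rw [hm_def]
          exact (Nat.nth_le_nth hEinf).mpr (by omega)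
        have heT : Nat.nth (Epred a) (i - C + r) ∈ T := factN _ heE.1 heM
        refine Finset.mem_filter.mpr ⟨heT, fun hmem => ?_⟩
        have h9 : Nat.nth (Epred a) (i - C) ≤ Nat.nth (Epred a) (i - C + r) := hgE r hr
        exact hy0mem.2 (factP _ hmem heE.2 y0 hy0mem.1 (by omega))
    have hni : y0 - 1 ∉ (Finset.range C).image (fun r => Nat.nth (Epred a) (i - C + r)) := by
      intro hmem
      obtain ⟨r, hr, heq⟩ := Finset.mem_image.mp hmem
      rw [Finset.mem_range] at hr
      have := hgE r hr
      omega
    have hcard : (insert (y0 - 1) ((Finset.range C).image (fun r => Nat.nth (Epred a) (i - C + r)))).card = C + 1 := by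
      rw [Finset.card_insert_of_notMem hni, Finset.card_image_of_injOn, Finset.card_range]
      intro r hr r' hr' hrr'
      have := Nat.nth_injective hEinf hrr'
      omega
    have := Finset.card_le_card hsub
    omega
  -- sum decomposition
  have h1 : ∑ n ∈ Finset.range (t + 1), a (σ n) = ∑ x ∈ T, a x :=
    (Finset.sum_image (fun x _ y _ h => σ.injective h)).symm
  have h2 : ∑ x ∈ T, a x
      = (∑ x ∈ T, if a x ≤ 0 then a x else 0) + (∑ x ∈ T, if 0 < a x then a x else 0) := by
    rw [← Finset.sum_add_distrib]
    apply Finset.sum_congr rfl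
    intro x _
    rcases le_or_gt (a x) 0 with h | h
    · rw [if_pos h, if_neg (not_lt.mpr h), add_zero]
    · rw [if_neg (not_le.mpr h), if_pos h, zero_add]
  have h3 : (∑ x ∈ T, if a x ≤ 0 then a x else 0) = SN a 1 i := by
    rw [SN_one a h0 i hi, ← hm]
    rw [← Finset.sum_filter, ← Finset.sum_filter]
    apply Finset.sum_congr _ (fun _ _ => rfl)
    ext z
    simp only [Finset.mem_filter, Finset.mem_range, Nat.lt_succ_iff]
    constructor
    · rintro ⟨hz, hz2⟩; exact ⟨factN' z hz hz2, hz2⟩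
    · rintro ⟨hz, hz2⟩; exact ⟨factN z hz2 hz, hz2⟩
  have h4 : (∑ x ∈ T, if 0 < a x then a x else 0) ≤ SP a 1 (i + C - 1) := by
    rw [SP_one a h0 hFinf (i + C - 1) (by omega)]
    have hpe : posEndIdx a (i + C - 1) = Nat.nth (Fpred a) (i + C - 2) := by
      show Nat.nth (Fpred a) (i + C - 1 - 1) = Nat.nth (Fpred a) (i + C - 2)
      rw [show i + C - 1 - 1 = i + C - 2 by omega]
    rw [hpe, ← Finset.sum_filter, ← Finset.sum_filter]
    apply Finset.sum_le_sum_of_subset_of_nonneg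
    · intro z hz
      rw [Finset.mem_filter] at hz
      rw [Finset.mem_filter, Finset.mem_range, Nat.lt_succ_iff]
      exact ⟨hupper z hz.1 hz.2, hz.2⟩
    · intro z hz _
      exact le_of_lt (Finset.mem_filter.mp hz).2
  have h5 : SP a 1 (i - C) ≤ ∑ x ∈ T, if 0 < a x then a x else 0 := by
    rcases le_or_gt i C with hic | hic
    · have hz : SP a 1 (i - C) = 0 := by
        unfold SP
        rw [if_pos (by omega)]
      rw [hz]
      apply Finset.sum_nonneg
      intro z _
      rcases le_or_gt (a z) 0 with h | h
      · rw [if_neg (not_lt.mpr h)]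
      · rw [if_pos h]; exact h.le
    · rw [SP_one a h0 hFinf (i - C) (by omega)]
      have hpe : posEndIdx a (i - C) = Nat.nth (Fpred a) (i - C - 1) := rfl
      rw [hpe, ← Finset.sum_filter, ← Finset.sum_filter]
      apply Finset.sum_le_sum_of_subset_of_nonneg
      · intro z hz
        rw [Finset.mem_filter, Finset.mem_range, Nat.lt_succ_iff] at hz
        rw [Finset.mem_filter]
        exact ⟨hlower hic z hz.1 hz.2, hz.2⟩
      · intro z hz _
        exact le_of_lt (Finset.mem_filter.mp hz).2
  rw [h1, h2, h3]
  constructor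
  · linarith
  · linarith
end
end
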